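/- arXiv:math/0601309 — 5 statements merged into one kernel-verified Lean document; each statement's English description precedes it below -/
import Mathlib

section
/- For all nonnegative integers m and n, (q;q)_m · (q;q)_n = Σ_{k=-n-1}^{m} (-1)^k · k · q^{binom(k+1,2)} · [m+n+1 choose n+k+1]_q, where (q;q)_r = ∏_{i=1}^{r} (1 - q^i) and [a choose b]_q denotes the Gaussian binomial coefficient. This is an identity of polynomials in q (equivalently, it holds for all complex q, or formally in ℤ[q]). -/
open Finset

/-- The q-shifted factorial `(q;q)_r = ∏_{i=1}^r (1 - q^i)` in `ℚ(q)`. -/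
noncomputable def qPoch (r : ℕ) : RatFunc ℚ :=
  ∏ i ∈ Finset.range r, (1 - (RatFunc.X : RatFunc ℚ) ^ (i + 1))

/-- The Gaussian binomial coefficient `[a choose b]_q`, zero outside `0 ≤ b ≤ a`. -/
noncomputable def qbinom (a : ℕ) (b : ℤ) : RatFunc ℚ :=
  if 0 ≤ b ∧ b ≤ (a : ℤ) then qPoch a / (qPoch b.toNat * qPoch (a - b.toNat)) else 0

/-!
Put `N = m + n + 1`, `z = q⁻ⁿ` and substitute `k ↦ i - n - 1`: the right-hand side becomes
`(-1)^(n+1) q^C(n+1,2) Σᵢ (i - n - 1) (-z)^i q^C(i,2) [N, i]`. By the q-binomial theorem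
`Σᵢ (-z)^i q^C(i,2) [N, i] = ∏_{i<N} (1 - z qⁱ)`, which vanishes at `z = q⁻ⁿ` since `n < N`.
The sum weighted by `i` is `z d/dz` of that product, so at `z = q⁻ⁿ` only the derivative of the
vanishing factor `1 - z qⁿ` survives: it equals `-(q;q)_m ∏_{i<n} (1 - q^(i-n))`, and the last
product is `(-1)ⁿ q^(-C(n+1,2)) (q;q)_n`. Both sums are evaluated by induction on `N` through the
q-Pascal rule `[N+1, b+1] = [N, b+1] + q^(N-b) [N, b]`.
-/

local notation "q" => (RatFunc.X : RatFunc ℚ)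

lemma one_sub_X_pow_ne_zero {i : ℕ} (hi : i ≠ 0) : 1 - q ^ i ≠ 0 := by
  have h := Polynomial.X_pow_sub_C_ne_zero (R := ℚ) (Nat.pos_of_ne_zero hi) 1
  rw [← neg_sub, neg_ne_zero]
  simpa using (map_ne_zero_iff _ (RatFunc.algebraMap_injective ℚ)).2 h

lemma qPoch_zero : qPoch 0 = 1 := rfl

lemma qPoch_succ (r : ℕ) : qPoch (r + 1) = qPoch r * (1 - q ^ (r + 1)) :=
  prod_range_succ _ _

lemma qPoch_ne_zero (r : ℕ) : qPoch r ≠ 0 :=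
  prod_ne_zero_iff.2 fun _ _ => one_sub_X_pow_ne_zero (Nat.succ_ne_zero _)

lemma qbinom_natCast (a b : ℕ) :
    qbinom a b = if b ≤ a then qPoch a / (qPoch b * qPoch (a - b)) else 0 := by
  simp [qbinom]

lemma qbinom_zero_right (a : ℕ) : qbinom a (0 : ℕ) = 1 := by
  rw [qbinom_natCast]; simp [qPoch_zero, qPoch_ne_zero]

lemma qbinom_self (a : ℕ) : qbinom a a = 1 := by
  rw [qbinom_natCast]; simp [qPoch_zero, qPoch_ne_zero]

lemma qbinom_of_lt {a b : ℕ} (h : a < b) : qbinom a b = 0 := by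
  rw [qbinom_natCast, if_neg h.not_ge]

lemma qbinom_succ_succ (N b : ℕ) :
    qbinom (N + 1) (b + 1 : ℕ) = qbinom N (b + 1 : ℕ) + q ^ (N - b) * qbinom N b := by
  rcases lt_trichotomy b N with hlt | rfl | hgt
  · obtain ⟨d, rfl⟩ := Nat.exists_eq_add_of_lt hlt
    rw [qbinom_natCast, qbinom_natCast, qbinom_natCast, if_pos (by omega), if_pos (by omega),
      if_pos (by omega), show b + d + 1 + 1 - (b + 1) = d + 1 by omega,
      show b + d + 1 - (b + 1) = d by omega, show b + d + 1 - b = d + 1 by omega,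
      qPoch_succ (b + d + 1), qPoch_succ b, qPoch_succ d]
    have := qPoch_ne_zero b
    have := qPoch_ne_zero d
    have := one_sub_X_pow_ne_zero (Nat.succ_ne_zero b)
    have := one_sub_X_pow_ne_zero (Nat.succ_ne_zero d)
    field_simp
    ring
  · rw [qbinom_self, qbinom_self, qbinom_of_lt (Nat.lt_succ_self _), Nat.sub_self]; ring
  · rw [qbinom_of_lt (by omega), qbinom_of_lt (by omega), qbinom_of_lt hgt]; ring

lemma choose_two_succ (j : ℕ) : (j + 1).choose 2 = j.choose 2 + j := by
  simp [Nat.choose_succ_succ', add_comm]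

noncomputable def qBinomSum (w : ℕ → RatFunc ℚ) (z : RatFunc ℚ) (N : ℕ) : RatFunc ℚ :=
  ∑ k ∈ range (N + 1), w k * (-z) ^ k * q ^ k.choose 2 * qbinom N k

section qBinomSum

variable (w : ℕ → RatFunc ℚ) (z : RatFunc ℚ) (N : ℕ)

lemma qBinomSum_zero : qBinomSum w z 0 = w 0 := by
  rw [qBinomSum, sum_range_one, qbinom_zero_right]
  simp

lemma qBinomSum_add_const (c : RatFunc ℚ) :
    qBinomSum (fun k => w k + c) z N = qBinomSum w z N + c * qBinomSum 1 z N := by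
  simp only [qBinomSum, mul_sum, ← sum_add_distrib, Pi.one_apply]
  exact sum_congr rfl fun _ _ => by ring

lemma qBinomSum_succ :
    qBinomSum w z (N + 1) = qBinomSum w z N - z * q ^ N * qBinomSum (fun k => w (k + 1)) z N := by
  have term (j : ℕ) (hj : j ∈ range (N + 1)) :
      w (j + 1) * (-z) ^ (j + 1) * q ^ (j + 1).choose 2 * qbinom (N + 1) (j + 1 : ℕ) =
        w (j + 1) * (-z) ^ (j + 1) * q ^ (j + 1).choose 2 * qbinom N (j + 1 : ℕ) -
          z * q ^ N * (w (j + 1) * (-z) ^ j * q ^ j.choose 2 * qbinom N j) := by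
    have hexp : (j + 1).choose 2 + (N - j) = N + j.choose 2 := by
      have := choose_two_succ j
      have := mem_range_succ_iff.1 hj
      omega
    rw [qbinom_succ_succ, mul_add, sub_eq_add_neg]
    congr 1
    calc _ = w (j + 1) * (-z) ^ (j + 1) * q ^ ((j + 1).choose 2 + (N - j)) * qbinom N j := by
            ring
      _ = _ := by rw [hexp]; ring
  have h_top : qbinom N (N + 1 : ℕ) = 0 := qbinom_of_lt (Nat.lt_succ_self N)
  rw [qBinomSum, sum_range_succ', sum_congr rfl term, sum_sub_distrib, ← mul_sum,
    sub_add_eq_add_sub, qbinom_zero_right, ← qbinom_zero_right N]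
  congr 1
  rw [← sum_range_succ' (fun k => w k * (-z) ^ k * q ^ k.choose 2 * qbinom N k),
    sum_range_succ, h_top, mul_zero, add_zero, qBinomSum]

lemma qBinomSum_one_eq_prod : qBinomSum 1 z N = ∏ i ∈ range N, (1 - z * q ^ i) := by
  induction N with
  | zero => simp [qBinomSum_zero]
  | succ N ih =>
    rw [qBinomSum_succ, show (fun k => (1 : ℕ → RatFunc ℚ) (k + 1)) = 1 from rfl, ih,
      prod_range_succ]
    ring

lemma qBinomSum_natCast_succ :
    qBinomSum (↑) z (N + 1) =
      qBinomSum (↑) z N - z * q ^ N * (qBinomSum (↑) z N + qBinomSum 1 z N) := by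
  rw [qBinomSum_succ]
  simp only [Nat.cast_succ]
  rw [qBinomSum_add_const, one_mul]

end qBinomSum

lemma inv_X_pow_mul_X_pow (n : ℕ) : q⁻¹ ^ n * q ^ n = 1 := by
  rw [inv_pow, inv_mul_cancel₀ (pow_ne_zero _ RatFunc.X_ne_zero)]

lemma inv_X_pow_mul_X_pow_add (n j : ℕ) : q⁻¹ ^ n * q ^ (n + j) = q ^ j := by
  rw [pow_add, ← mul_assoc, inv_X_pow_mul_X_pow, one_mul]

lemma inv_X_pow_add_mul_X_pow (i j : ℕ) : q⁻¹ ^ (i + j) * q ^ j = q⁻¹ ^ i := by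
  rw [pow_add, mul_assoc, inv_X_pow_mul_X_pow, mul_one]

lemma qBinomSum_one_inv_X_pow_of_lt {n N : ℕ} (h : n < N) : qBinomSum 1 (q⁻¹ ^ n) N = 0 := by
  rw [qBinomSum_one_eq_prod]
  refine prod_eq_zero (mem_range.2 h) ?_
  rw [inv_X_pow_mul_X_pow, sub_self]

lemma qBinomSum_natCast_inv_X_pow (n m : ℕ) :
    qBinomSum (↑) (q⁻¹ ^ n) (n + 1 + m) = -qPoch m * ∏ i ∈ range n, (1 - q⁻¹ ^ n * q ^ i) := by
  induction m with
  | zero =>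
    rw [add_zero, qBinomSum_natCast_succ, inv_X_pow_mul_X_pow,
      qBinomSum_one_eq_prod, qPoch_zero]
    ring
  | succ m ih =>
    rw [← add_assoc, qBinomSum_natCast_succ, ih, qBinomSum_one_inv_X_pow_of_lt (by omega),
      add_assoc, inv_X_pow_mul_X_pow_add, qPoch_succ]
    ring

lemma X_pow_choose_two_mul_prod_one_sub_inv_X_pow (n : ℕ) :
    q ^ (n + 1).choose 2 * ∏ i ∈ range n, (1 - q⁻¹ ^ (i + 1)) = (-1) ^ n * qPoch n := by
  induction n with
  | zero => simp [qPoch_zero]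
  | succ n ih =>
    rw [choose_two_succ (n + 1), pow_add, prod_range_succ, qPoch_succ]
    linear_combination (q ^ (n + 1) - 1) * ih -
      (q ^ (n + 1).choose 2 * ∏ i ∈ range n, (1 - q⁻¹ ^ (i + 1))) * inv_X_pow_mul_X_pow (n + 1)

lemma X_pow_choose_two_mul_prod_one_sub_inv_X_pow_mul (n : ℕ) :
    q ^ (n + 1).choose 2 * ∏ i ∈ range n, (1 - q⁻¹ ^ n * q ^ i) = (-1) ^ n * qPoch n := by
  rw [← X_pow_choose_two_mul_prod_one_sub_inv_X_pow, ← prod_range_reflect]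
  refine congrArg _ (prod_congr rfl fun i hi => ?_)
  have hi := mem_range.1 hi
  nth_rw 1 [show n = i + 1 + (n - 1 - i) by omega]
  rw [inv_X_pow_add_mul_X_pow]

lemma two_mul_choose_two (a : ℕ) : 2 * (a.choose 2 : ℤ) = a * (a - 1) := by
  have h : (2 * a.choose 2 : ℚ) = a * (a - 1) := by rw [Nat.cast_choose_two]; ring
  exact_mod_cast h

lemma jacobi_summand_eq (n N i : ℕ) (k : ℤ) (hk : (n : ℤ) + k + 1 = i) :
    (-1 : RatFunc ℚ) ^ k * (k : RatFunc ℚ) * q ^ (k * (k + 1) / 2) * qbinom N ((n : ℤ) + k + 1) =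
      (-1) ^ (n + 1) * q ^ (n + 1).choose 2 *
        (((i : RatFunc ℚ) - (n + 1)) * (-q⁻¹ ^ n) ^ i * q ^ i.choose 2 * qbinom N i) := by
  have hk' : k = (i : ℤ) - ((n + 1 : ℕ) : ℤ) := by push_cast; omega
  have hsign : (-1 : RatFunc ℚ) ^ k = (-1) ^ (n + 1) * (-1) ^ i := by
    rw [hk', zpow_sub₀ (by norm_num), zpow_natCast, zpow_natCast, div_eq_mul_inv, ← inv_pow,
      inv_neg_one, mul_comm]
  have hexp : k * (k + 1) / 2 = ((n + 1).choose 2 + i.choose 2 : ℕ) - ((n * i : ℕ) : ℤ) := by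
    have hn := two_mul_choose_two (n + 1)
    have hi := two_mul_choose_two i
    rw [show k * (k + 1) = 2 * (((n + 1).choose 2 + i.choose 2 : ℕ) - ((n * i : ℕ) : ℤ)) by
      rw [hk']; push_cast at hn hi ⊢; linear_combination -hn - hi]
    exact Int.mul_ediv_cancel_left _ two_ne_zero
  have hpow : q ^ (k * (k + 1) / 2) = q ^ (n + 1).choose 2 * q ^ i.choose 2 * (q⁻¹ ^ n) ^ i := by
    rw [hexp, zpow_sub₀ RatFunc.X_ne_zero, zpow_natCast, zpow_natCast, pow_add, ← pow_mul,
      inv_pow, div_eq_mul_inv]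
  have hcast : (k : RatFunc ℚ) = i - (n + 1) := by rw [hk']; push_cast; ring
  rw [hsign, hpow, hcast, hk, neg_pow]
  ring

/-- Finite form of Jacobi's identity (Theorem 2.1):
`(q;q)_m (q;q)_n = Σ_{k=-n-1}^{m} (-1)^k k q^{C(k+1,2)} [m+n+1, n+k+1]_q`. -/
theorem finite_jacobi (m n : ℕ) :
    qPoch m * qPoch n =
      ∑ k ∈ Finset.Icc (-(n : ℤ) - 1) (m : ℤ),
        (-1 : RatFunc ℚ) ^ k * (k : RatFunc ℚ) *
          (RatFunc.X : RatFunc ℚ) ^ (k * (k + 1) / 2) *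
            qbinom (m + n + 1) ((n : ℤ) + k + 1) := by
  rw [Int.Icc_eq_finset_map, sum_map,
    show ((m : ℤ) + 1 - (-(n : ℤ) - 1)).toNat = m + n + 1 + 1 by omega]
  simp only [Function.Embedding.trans_apply, Nat.castEmbedding_apply, addLeftEmbedding_apply]
  rw [sum_congr rfl fun i _ => jacobi_summand_eq n (m + n + 1) i _ (by ring), ← mul_sum]
  have hsum : qBinomSum (fun i => (i : RatFunc ℚ) - (n + 1)) (q⁻¹ ^ n) (m + n + 1) =
      -qPoch m * ∏ i ∈ range n, (1 - q⁻¹ ^ n * q ^ i) := by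
    simp_rw [sub_eq_add_neg (_ : RatFunc ℚ) ((n : RatFunc ℚ) + 1)]
    rw [qBinomSum_add_const, qBinomSum_one_inv_X_pow_of_lt (by omega), mul_zero, add_zero,
      show m + n + 1 = n + 1 + m by ring, qBinomSum_natCast_inv_X_pow]
  have hsq : ((-1 : RatFunc ℚ) ^ n) ^ 2 = 1 := by rw [← pow_mul, pow_mul', neg_one_sq, one_pow]
  rw [← qBinomSum, hsum]
  linear_combination (-(-1) ^ n * qPoch m) * X_pow_choose_two_mul_prod_one_sub_inv_X_pow_mul n -
    qPoch m * qPoch n * hsq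
end

section
/- In the ring of formal power series ℤ[[q]], the infinite product ∏_{i=1}^{∞} (1 - q^i)^3 equals Σ_{k=0}^{∞} (-1)^k (2k+1) q^{k(k+1)/2}. -/
/-! By induction on `n` with the two `q`-Pascal rules, the coefficient of `z ^ t` in the
polynomial `∏_{i<n} (z - q^i) (1 - q^(i+1) z)` is `(-1)^(n+t) [2n, t]_q q^(j(j+1)/2)` with
`j = t - n` (finite form of the triple product). The factor `z - 1` makes the value at `z = 1`
vanish and leaves `(q;q)_n (q;q)_(n-1)` as the derivative there; together these give
`Σ_t (2j + 1) (-1)^j [2n, t]_q q^(j(j+1)/2) = 2 (q;q)_n (q;q)_(n-1)`.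

In `R⟦q⟧` one has `[a+b, a]_q (q;q)_a ≡ 1 mod q^(b+1)`. Hence, multiplied by `(q;q)_n` and
reduced mod `q^n`, the left side loses its `q`-binomials and, pairing `j` with `-1 - j`,
becomes twice the partial Jacobi sum, while the right side becomes `2 (q;q)_∞^3`. Over `ℤ`
the factor `2` cancels. -/

open Finset PowerSeries

namespace Jacobi

variable {R : Type*} [CommRing R] (q : R)

def qBinom : ℕ → ℕ → R
  | _, 0 => 1
  | 0, _ + 1 => 0
  | m + 1, k + 1 => qBinom m k + q ^ (k + 1) * qBinom m (k + 1)

def qPoch (n : ℕ) : R := ∏ i ∈ range n, (1 - q ^ (i + 1))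

@[simp] lemma qBinom_zero_right (m : ℕ) : qBinom q m 0 = 1 := by cases m <;> rfl

@[simp] lemma qBinom_zero_succ (k : ℕ) : qBinom q 0 (k + 1) = 0 := rfl

lemma qBinom_succ_succ (m k : ℕ) :
    qBinom q (m + 1) (k + 1) = qBinom q m k + q ^ (k + 1) * qBinom q m (k + 1) := rfl

lemma qBinom_eq_zero_of_lt {m k : ℕ} (h : m < k) : qBinom q m k = 0 := by
  induction m generalizing k with
  | zero => obtain ⟨k, rfl⟩ := Nat.exists_eq_add_one_of_ne_zero h.ne'; rfl
  | succ m ih =>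
    obtain ⟨k, rfl⟩ := Nat.exists_eq_add_one_of_ne_zero (by omega : k ≠ 0)
    rw [qBinom_succ_succ, ih (by omega), ih (by omega), mul_zero, add_zero]

@[simp] lemma qBinom_self (m : ℕ) : qBinom q m m = 1 := by
  induction m with
  | zero => rfl
  | succ m ih =>
    rw [qBinom_succ_succ, ih, qBinom_eq_zero_of_lt q m.lt_succ_self, mul_zero, add_zero]

/-- The truncated exponent `m - k` is harmless: for `k > m` the term vanishes. -/
lemma qBinom_succ_succ' (m k : ℕ) :
    qBinom q (m + 1) (k + 1) = qBinom q m (k + 1) + q ^ (m - k) * qBinom q m k := by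
  induction m generalizing k with
  | zero => cases k <;> simp [qBinom_succ_succ]
  | succ m ih =>
    cases k with
    | zero =>
      rw [qBinom_succ_succ q m 0, qBinom_succ_succ q (m + 1) 0, ih 0]
      simp only [qBinom_zero_right, Nat.sub_zero]
      ring
    | succ k =>
      have hl : qBinom q (m + 2) (k + 2) = qBinom q m (k + 1) + q ^ (m - k) * qBinom q m k +
          q ^ (k + 2) * (qBinom q m (k + 2) + q ^ (m - (k + 1)) * qBinom q m (k + 1)) := by
        rw [qBinom_succ_succ, ih, ih]
      rw [hl, qBinom_succ_succ q m (k + 1), qBinom_succ_succ q m k, Nat.add_sub_add_right]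
      rcases lt_or_ge m (k + 1) with hm | hm
      · rw [qBinom_eq_zero_of_lt q hm]; ring
      · rw [show m - k = m - (k + 1) + 1 by omega]; ring

lemma qBinom_add_two_add_two (m k : ℕ) :
    qBinom q (m + 2) (k + 2) = q ^ (k + 2) * qBinom q m (k + 2) +
      (1 + q ^ (m + 1)) * qBinom q m (k + 1) + q ^ (m - k) * qBinom q m k := by
  rw [qBinom_succ_succ, qBinom_succ_succ', qBinom_succ_succ']
  rcases lt_or_ge m (k + 1) with hm | hm
  · rw [qBinom_eq_zero_of_lt q hm]; ring
  · rw [show m - k = m - (k + 1) + 1 by omega, show m + 1 = k + 2 + (m - (k + 1)) by omega]; ring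

@[simp] lemma qPoch_zero : qPoch q 0 = 1 := prod_range_zero _

lemma qPoch_succ (n : ℕ) : qPoch q (n + 1) = qPoch q n * (1 - q ^ (n + 1)) := prod_range_succ _ _

lemma qBinom_add_mul_qPoch (a b : ℕ) :
    qBinom q (a + b) a * qPoch q a * qPoch q b = qPoch q (a + b) := by
  induction a generalizing b with
  | zero => simp [qPoch]
  | succ a iha =>
    induction b with
    | zero => simp
    | succ b ihb =>
      have h1 := iha (b + 1)
      rw [qPoch_succ q b] at h1
      rw [show a + 1 + b = a + (b + 1) by omega, qPoch_succ q a] at ihb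
      rw [show a + 1 + (b + 1) = a + (b + 1) + 1 by omega, qBinom_succ_succ,
        qPoch_succ q (a + (b + 1)), qPoch_succ q a, qPoch_succ q b]
      linear_combination (1 - q ^ (a + 1)) * h1 + q ^ (a + 1) * (1 - q ^ (b + 1)) * ihb

def tri (j : ℤ) : ℕ := (j * (j + 1) / 2).toNat

lemma two_mul_tri (j : ℤ) : 2 * (tri j : ℤ) = j * (j + 1) := by
  have hev : 2 ∣ j * (j + 1) := (Int.even_mul_succ_self j).two_dvd
  have hnn : 0 ≤ j * (j + 1) := by rcases le_or_gt 0 j with h | h <;> nlinarith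
  rw [tri, Int.toNat_of_nonneg (by omega)]
  omega

lemma tri_of_eq_add_one {i j : ℤ} (h : j = i + 1) : (tri j : ℤ) = tri i + i + 1 := by
  subst h
  linarith [two_mul_tri i, two_mul_tri (i + 1)]

lemma tri_neg_sub_one (j : ℤ) : tri (-j - 1) = tri j := by
  rw [tri, tri]; ring_nf

lemma tri_natCast (k : ℕ) : tri k = k * (k + 1) / 2 := by
  have h : 2 * tri k = k * (k + 1) := by exact_mod_cast two_mul_tri k
  omega

lemma le_tri (j : ℤ) : j ≤ tri j := by
  have := two_mul_tri j
  rcases le_or_gt j 0 with h | h <;> nlinarith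

lemma neg_sub_one_le_tri (j : ℤ) : -j - 1 ≤ tri j := by
  simpa [tri_neg_sub_one] using le_tri (-j - 1)

open scoped Polynomial
open Polynomial (monomial)

def jacobiCoeff (n t : ℕ) : R := (-1) ^ (n + t) * qBinom q (2 * n) t * q ^ tri (t - n)

noncomputable def jacobiPoly (n : ℕ) : R[X] :=
  ∑ t ∈ range (2 * n + 1), monomial t (jacobiCoeff q n t)

lemma coeff_jacobiPoly (n t : ℕ) : (jacobiPoly q n).coeff t = jacobiCoeff q n t := by
  rw [jacobiPoly, Polynomial.finsetSum_coeff]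
  simp only [Polynomial.coeff_monomial, sum_ite_eq', mem_range]
  split_ifs with ht
  · rfl
  · rw [jacobiCoeff, qBinom_eq_zero_of_lt q (by omega), mul_zero, zero_mul]

lemma jacobiCoeff_succ_zero (n : ℕ) : jacobiCoeff q (n + 1) 0 = -(q ^ n * jacobiCoeff q n 0) := by
  have e : tri ((0 : ℕ) - (n + 1 : ℕ)) = n + tri ((0 : ℕ) - n) := by
    have := tri_of_eq_add_one (i := (0 : ℕ) - (n + 1 : ℕ)) (j := (0 : ℕ) - n) (by omega)
    omega
  simp only [jacobiCoeff, qBinom_zero_right, e, pow_add]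
  ring

lemma jacobiCoeff_succ_one (n : ℕ) : jacobiCoeff q (n + 1) 1 =
    -(q ^ n * jacobiCoeff q n 1) + (1 + q ^ (2 * n + 1)) * jacobiCoeff q n 0 := by
  have hq : qBinom q (2 * (n + 1)) 1 = q * qBinom q (2 * n) 1 + (1 + q ^ (2 * n + 1)) := by
    rw [show 2 * (n + 1) = 2 * n + 1 + 1 by ring, qBinom_succ_succ, qBinom_succ_succ',
      qBinom_zero_right, qBinom_zero_right, Nat.sub_zero]
    ring
  have e1 : tri ((1 : ℕ) - (n + 1 : ℕ)) = tri ((0 : ℕ) - n) := congrArg tri (by omega)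
  have e2 : q * q ^ tri ((0 : ℕ) - n) = q ^ n * q ^ tri ((1 : ℕ) - n) := by
    rw [← pow_succ', ← pow_add]
    congr 1
    have := tri_of_eq_add_one (i := (0 : ℕ) - n) (j := (1 : ℕ) - n) (by omega)
    omega
  simp only [jacobiCoeff, hq, e1, qBinom_zero_right]
  linear_combination (-1) ^ n * qBinom q (2 * n) 1 * e2

lemma jacobiCoeff_succ_add_two (n s : ℕ) :
    jacobiCoeff q (n + 1) (s + 2) = -(q ^ n * jacobiCoeff q n (s + 2)) +
      (1 + q ^ (2 * n + 1)) * jacobiCoeff q n (s + 1) - q ^ (n + 1) * jacobiCoeff q n s := by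
  have e1 : q ^ (s + 2) * q ^ tri ((s + 1 : ℕ) - n) = q ^ n * q ^ tri ((s + 2 : ℕ) - n) := by
    rw [← pow_add, ← pow_add]
    congr 1
    have := tri_of_eq_add_one (i := (s + 1 : ℕ) - n) (j := (s + 2 : ℕ) - n) (by omega)
    omega
  have e2 : tri ((s + 2 : ℕ) - (n + 1 : ℕ)) = tri ((s + 1 : ℕ) - n) := congrArg tri (by omega)
  have e3 : q ^ (2 * n - s) * qBinom q (2 * n) s * q ^ tri ((s + 1 : ℕ) - n) =
      q ^ (n + 1) * qBinom q (2 * n) s * q ^ tri (s - n) := by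
    rcases lt_or_ge (2 * n) s with hs | hs
    · rw [qBinom_eq_zero_of_lt q hs]; ring
    · rw [mul_right_comm, ← pow_add, mul_right_comm _ _ (q ^ tri (s - n)), ← pow_add]
      congr 2
      have := tri_of_eq_add_one (i := s - n) (j := (s + 1 : ℕ) - n) (by omega)
      omega
  simp only [jacobiCoeff, show 2 * (n + 1) = 2 * n + 2 by ring, qBinom_add_two_add_two, e2]
  linear_combination (-1) ^ (n + s + 3) * qBinom q (2 * n) (s + 2) * e1 + (-1) ^ (n + s + 3) * e3

lemma jacobiPoly_succ (n : ℕ) : jacobiPoly q (n + 1) =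
    (Polynomial.X - Polynomial.C q ^ n) * (1 - Polynomial.C q ^ (n + 1) * Polynomial.X) *
      jacobiPoly q n := by
  have hmul : (Polynomial.X - Polynomial.C q ^ n) * (1 - Polynomial.C q ^ (n + 1) * Polynomial.X) *
      jacobiPoly q n = -(Polynomial.C (q ^ n) * jacobiPoly q n) +
        Polynomial.X ^ 1 * (Polynomial.C (1 + q ^ (2 * n + 1)) * jacobiPoly q n) -
          Polynomial.X ^ 2 * (Polynomial.C (q ^ (n + 1)) * jacobiPoly q n) := by
    simp only [map_add, map_one, map_pow]
    ring
  rw [hmul]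
  ext s
  rcases s with _ | _ | s
  all_goals simp only [Polynomial.coeff_add, Polynomial.coeff_sub, Polynomial.coeff_neg,
    Polynomial.coeff_C_mul, Polynomial.coeff_X_pow_mul', coeff_jacobiPoly]
  · simp [jacobiCoeff_succ_zero]
  · simp [jacobiCoeff_succ_one]
  · simp [jacobiCoeff_succ_add_two]

theorem jacobiPoly_eq_prod (n : ℕ) : jacobiPoly q n =
    ∏ i ∈ range n,
      (Polynomial.X - Polynomial.C q ^ i) * (1 - Polynomial.C q ^ (i + 1) * Polynomial.X) := by
  induction n with
  | zero => simp [jacobiPoly, jacobiCoeff, tri]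
  | succ n ih => rw [jacobiPoly_succ, ih, prod_range_succ, mul_comm]

lemma jacobiPoly_succ_eq_X_sub_one_mul (n : ℕ) : jacobiPoly q (n + 1) = (Polynomial.X - 1) *
    ((1 - Polynomial.C q * Polynomial.X) * ∏ i ∈ range n,
      (Polynomial.X - Polynomial.C q ^ (i + 1)) *
        (1 - Polynomial.C q ^ (i + 1 + 1) * Polynomial.X)) := by
  rw [jacobiPoly_eq_prod, prod_range_succ']
  ring

lemma eval_one_jacobiPoly_succ (n : ℕ) : (jacobiPoly q (n + 1)).eval 1 = 0 := by
  simp [jacobiPoly_succ_eq_X_sub_one_mul]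

lemma eval_one_derivative_jacobiPoly_succ (n : ℕ) :
    (Polynomial.derivative (jacobiPoly q (n + 1))).eval 1 = qPoch q (n + 1) * qPoch q n := by
  rw [jacobiPoly_succ_eq_X_sub_one_mul, Polynomial.derivative_mul]
  simp only [Polynomial.derivative_sub, Polynomial.derivative_X, Polynomial.derivative_one,
    Polynomial.eval_add, Polynomial.eval_mul, Polynomial.eval_sub, Polynomial.eval_one,
    Polynomial.eval_X, Polynomial.eval_C, Polynomial.eval_pow, Polynomial.eval_prod, sub_self,
    sub_zero, one_mul, mul_one, zero_mul, add_zero]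
  rw [prod_mul_distrib, qPoch, qPoch, prod_range_succ' _ n]
  ring

theorem sum_mul_jacobiCoeff_succ (n : ℕ) :
    ∑ t ∈ range (2 * n + 3), (2 * t - 2 * n - 1 : R) * jacobiCoeff q (n + 1) t =
      2 * (qPoch q (n + 1) * qPoch q n) := by
  have hval := eval_one_jacobiPoly_succ q n
  have hder := eval_one_derivative_jacobiPoly_succ q n
  simp only [jacobiPoly, Polynomial.eval_finsetSum, Polynomial.derivative_sum,
    Polynomial.derivative_monomial, Polynomial.eval_monomial, one_pow, mul_one] at hval hder
  rw [show 2 * (n + 1) + 1 = 2 * n + 3 by ring] at hval hder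
  calc ∑ t ∈ range (2 * n + 3), (2 * t - 2 * n - 1 : R) * jacobiCoeff q (n + 1) t
      = 2 * ∑ t ∈ range (2 * n + 3), jacobiCoeff q (n + 1) t * t -
          (2 * n + 1) * ∑ t ∈ range (2 * n + 3), jacobiCoeff q (n + 1) t := by
        rw [mul_sum, mul_sum, ← sum_sub_distrib]
        exact sum_congr rfl fun t _ ↦ by ring
    _ = 2 * (qPoch q (n + 1) * qPoch q n) := by rw [hval, hder]; ring

lemma sum_pow_tri_sub_eq_two_mul_add (n : ℕ) :
    ∑ t ∈ range (2 * n + 3),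
        (2 * t - 2 * n - 1 : R) * ((-1) ^ (n + 1 + t) * q ^ tri (t - (n + 1 : ℕ))) =
      2 * ∑ k ∈ range (n + 1), (-1) ^ k * (2 * k + 1) * q ^ tri k +
        (-1) ^ (n + 1) * (2 * (n + 1) + 1) * q ^ tri (n + 1 : ℕ) := by
  have hlow : ∀ k ∈ range (n + 1), (2 * (n + 1 - 1 - k : ℕ) - 2 * n - 1 : R) *
      ((-1) ^ (n + 1 + (n + 1 - 1 - k)) * q ^ tri ((n + 1 - 1 - k : ℕ) - (n + 1 : ℕ))) =
        (-1) ^ k * (2 * k + 1) * q ^ tri k := by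
    intro k hk
    have hk : k ≤ n := Nat.lt_succ_iff.mp (mem_range.mp hk)
    rw [show ((n + 1 - 1 - k : ℕ) : ℤ) - (n + 1 : ℕ) = -k - 1 by omega, tri_neg_sub_one,
      show n + 1 + (n + 1 - 1 - k) = k + 2 * (n - k) + 1 by omega, Nat.cast_sub (by omega)]
    simp only [pow_add, pow_mul, neg_one_sq, one_pow]
    push_cast
    ring
  have hhigh : ∀ k ∈ range (n + 1), (2 * (n + 1 + k : ℕ) - 2 * n - 1 : R) *
      ((-1) ^ (n + 1 + (n + 1 + k)) * q ^ tri ((n + 1 + k : ℕ) - (n + 1 : ℕ))) =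
        (-1) ^ k * (2 * k + 1) * q ^ tri k := by
    intro k _
    rw [show ((n + 1 + k : ℕ) : ℤ) - (n + 1 : ℕ) = k by omega,
      show n + 1 + (n + 1 + k) = 2 * (n + 1) + k by omega]
    simp only [pow_add, pow_mul, neg_one_sq, one_pow]
    push_cast
    ring
  rw [show 2 * n + 3 = (n + 1) + (n + 1 + 1) by ring, sum_range_add, sum_range_succ _ (n + 1),
    ← sum_range_reflect, sum_congr rfl hlow, sum_congr rfl hhigh,
    show ((n + 1 + (n + 1) : ℕ) : ℤ) - (n + 1 : ℕ) = (n + 1 : ℕ) by omega,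
    show n + 1 + (n + 1 + (n + 1)) = 2 * (n + 1) + (n + 1) by omega]
  simp only [pow_add, pow_mul, neg_one_sq, one_pow]
  push_cast
  ring

lemma X_pow_mul_mem_span {e k n : ℕ} {f : R⟦X⟧} (h : n ≤ e + k)
    (hf : f ∈ Ideal.span {X ^ k}) :
    X ^ e * f ∈ Ideal.span {(X : R⟦X⟧) ^ n} := by
  rw [Ideal.mem_span_singleton] at hf ⊢
  exact (pow_dvd_pow X h).trans (pow_add (X : R⟦X⟧) e k ▸ mul_dvd_mul_left _ hf)

lemma qPoch_X_sub_mem_span {m k : ℕ} (h : m ≤ k) :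
    qPoch (X : R⟦X⟧) k - qPoch X m ∈ Ideal.span {X ^ (m + 1)} := by
  induction k, h using Nat.le_induction with
  | base => simp
  | succ k hmk ih =>
    have hX : qPoch (X : R⟦X⟧) k * X ^ (k + 1) ∈ Ideal.span {X ^ (m + 1)} :=
      Ideal.mul_mem_left _ _ (Ideal.mem_span_singleton.mpr (pow_dvd_pow X (by omega)))
    rw [qPoch_succ, show qPoch (X : R⟦X⟧) k * (1 - X ^ (k + 1)) - qPoch X m =
      (qPoch X k - qPoch X m) - qPoch X k * X ^ (k + 1) by ring]
    exact sub_mem ih hX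

lemma qPoch_X_sub_qPoch_X_mem_span (m k : ℕ) :
    qPoch (X : R⟦X⟧) k - qPoch X m ∈ Ideal.span {X ^ (min m k + 1)} := by
  rcases le_total m k with h | h
  · simpa [min_eq_left h] using qPoch_X_sub_mem_span h
  · simpa [min_eq_right h] using neg_mem (qPoch_X_sub_mem_span (R := R) h)

lemma isUnit_qPoch_X (n : ℕ) : IsUnit (qPoch (X : R⟦X⟧) n) := by
  rw [PowerSeries.isUnit_iff_constantCoeff, qPoch, map_prod]
  simp

lemma qBinom_X_mul_qPoch_X_sub_one_mem_span (a b : ℕ) :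
    qBinom (X : R⟦X⟧) (a + b) a * qPoch X a - 1 ∈ Ideal.span {X ^ (b + 1)} := by
  rw [← Ideal.mul_unit_mem_iff_mem _ (isUnit_qPoch_X b), sub_mul, one_mul,
    qBinom_add_mul_qPoch]
  simpa using qPoch_X_sub_mem_span (R := R) (Nat.le_add_left b a)

lemma qPoch_X_mul_jacobiCoeff_smodEq {n t : ℕ} (ht : t ≤ 2 * n) :
    qPoch (X : R⟦X⟧) n * jacobiCoeff X n t ≡ (-1) ^ (n + t) * X ^ tri (t - n)
      [SMOD Ideal.span {X ^ n}] := by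
  rw [jacobiCoeff, show
    qPoch (X : R⟦X⟧) n * ((-1) ^ (n + t) * qBinom X (2 * n) t * X ^ tri (t - n)) =
      (-1) ^ (n + t) * (X ^ tri (t - n) * (qBinom X (2 * n) t * qPoch X n)) by ring]
  refine (SModEq.refl _).mul ?_
  obtain ⟨b, hb⟩ := Nat.exists_eq_add_of_le ht
  have h1 := le_tri (t - n)
  have h2 := neg_sub_one_le_tri (t - n)
  rw [SModEq.sub_mem, ← mul_sub_one, show qBinom (X : R⟦X⟧) (2 * n) t * qPoch X n - 1 =
    qBinom X (2 * n) t * (qPoch X n - qPoch X t) + (qBinom X (2 * n) t * qPoch X t - 1) by ring,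
    mul_add]
  -- `tri (t - n) ≥ max (t - n) (n - t - 1)` supplies the powers of `X` missing from both terms.
  refine add_mem (X_pow_mul_mem_span ?_ (Ideal.mul_mem_left _ _
    (qPoch_X_sub_qPoch_X_mem_span t n))) (X_pow_mul_mem_span (k := b + 1) ?_ ?_)
  · omega
  · omega
  · rw [hb]; exact qBinom_X_mul_qPoch_X_sub_one_mem_span t b

lemma coeff_eq_of_smodEq {N : ℕ} {f g : R⟦X⟧} (h : f ≡ g [SMOD Ideal.span {X ^ (N + 1)}]) :
    coeff N f = coeff N g := by
  rw [SModEq.sub_mem, Ideal.mem_span_singleton, PowerSeries.X_pow_dvd_iff] at h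
  exact sub_eq_zero.mp (by simpa using h N N.lt_succ_self)

theorem two_mul_qPoch_X_pow_three_smodEq {N M : ℕ} (h : N ≤ M) :
    2 * qPoch (X : R⟦X⟧) M ^ 3 ≡
      2 * ∑ k ∈ range (N + 1), (-1) ^ k * (2 * k + 1) * (X : R⟦X⟧) ^ tri k
        [SMOD Ideal.span {X ^ (N + 1)}] := by
  have hM : ∀ k, N ≤ k →
      qPoch (X : R⟦X⟧) k ≡ qPoch X M [SMOD Ideal.span {X ^ (N + 1)}] :=
    fun k hk ↦ SModEq.sub_mem.mpr <| Ideal.span_singleton_le_span_singleton.mpr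
      (pow_dvd_pow X (by omega)) (qPoch_X_sub_qPoch_X_mem_span M k)
  have hcube : qPoch (X : R⟦X⟧) (N + 1) * (2 * (qPoch X (N + 1) * qPoch X N)) ≡
      qPoch X M * (2 * (qPoch X M * qPoch X M)) [SMOD Ideal.span {X ^ (N + 1)}] :=
    have hN₁ := hM (N + 1) N.le_succ
    SModEq.mul hN₁ (SModEq.mul SModEq.rfl (SModEq.mul hN₁ (hM N le_rfl)))
  have htail : (X : R⟦X⟧) ^ tri (N + 1 : ℕ) ∈ Ideal.span {X ^ (N + 1)} :=
    Ideal.mem_span_singleton.mpr (pow_dvd_pow X (by have := le_tri (N + 1 : ℕ); omega))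
  calc 2 * qPoch (X : R⟦X⟧) M ^ 3
      = qPoch X M * (2 * (qPoch X M * qPoch X M)) := by ring
    _ ≡ qPoch X (N + 1) * (2 * (qPoch X (N + 1) * qPoch X N))
          [SMOD Ideal.span {X ^ (N + 1)}] := by
        exact hcube.symm
    _ = qPoch X (N + 1) * ∑ t ∈ range (2 * N + 3),
          (2 * t - 2 * N - 1 : R⟦X⟧) * jacobiCoeff X (N + 1) t := by
        rw [sum_mul_jacobiCoeff_succ]
    _ ≡ ∑ t ∈ range (2 * N + 3), (2 * t - 2 * N - 1 : R⟦X⟧) *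
          ((-1) ^ (N + 1 + t) * X ^ tri (t - (N + 1 : ℕ))) [SMOD Ideal.span {X ^ (N + 1)}] := by
        rw [mul_sum]
        refine SModEq.sum fun t ht ↦ ?_
        rw [mul_left_comm]
        exact (SModEq.refl _).mul (qPoch_X_mul_jacobiCoeff_smodEq (by rw [mem_range] at ht; omega))
    _ = 2 * ∑ k ∈ range (N + 1), (-1) ^ k * (2 * k + 1) * (X : R⟦X⟧) ^ tri k +
          (-1) ^ (N + 1) * (2 * (N + 1) + 1) * (X : R⟦X⟧) ^ tri (N + 1 : ℕ) :=
        sum_pow_tri_sub_eq_two_mul_add X N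
    _ ≡ 2 * ∑ k ∈ range (N + 1), (-1) ^ k * (2 * k + 1) * (X : R⟦X⟧) ^ tri k + 0
          [SMOD Ideal.span {X ^ (N + 1)}] :=
        SModEq.rfl.add (SModEq.zero.mpr (Ideal.mul_mem_left _ _ htail))
    _ = _ := add_zero _

end Jacobi

open Jacobi in
/-- Jacobi's identity `(q;q)_∞^3 = Σ_{k≥0} (-1)^k (2k+1) q^{k(k+1)/2}` in `ℤ[[q]]`,
stated coefficientwise: for every `N`, the coefficient of `q^N` in any sufficiently
long truncation `∏_{i=1}^{M} (1-q^i)^3` (any `M ≥ N`) equals the coefficient of `q^N`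
in `Σ_{k=0}^{N} (-1)^k (2k+1) q^{k(k+1)/2}` (the terms with `k > N` do not contribute). -/
theorem jacobi_identity (N M : ℕ) (h : N ≤ M) :
    (PowerSeries.coeff (R := ℤ) N) (∏ i ∈ Finset.range M, (1 - (X : PowerSeries ℤ) ^ (i + 1)) ^ 3) =
      (PowerSeries.coeff (R := ℤ) N)
        (∑ k ∈ Finset.range (N + 1),
          PowerSeries.C (R := ℤ) ((-1) ^ k * (2 * k + 1)) * (X : PowerSeries ℤ) ^ (k * (k + 1) / 2)) := by
  have hprod : ∏ i ∈ range M, (1 - (X : ℤ⟦X⟧) ^ (i + 1)) ^ 3 = qPoch X M ^ 3 :=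
    prod_pow _ _ _
  have hsum : ∑ k ∈ range (N + 1),
      C (R := ℤ) ((-1) ^ k * (2 * k + 1)) * (X : ℤ⟦X⟧) ^ (k * (k + 1) / 2) =
      ∑ k ∈ range (N + 1), (-1) ^ k * (2 * k + 1) * (X : ℤ⟦X⟧) ^ tri k :=
    sum_congr rfl fun k _ ↦ by simp [tri_natCast]
  have h2 := coeff_eq_of_smodEq (two_mul_qPoch_X_pow_three_smodEq (R := ℤ) h)
  rw [hprod, hsum]
  have hc : ∀ f : ℤ⟦X⟧, coeff N (2 * f) = 2 * coeff N f := fun f ↦ by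
    rw [two_mul, map_add, two_mul]
  rw [hc, hc] at h2
  omega
end

section
/- In the ring of formal power series ℤ[[q]], ∏_{i=1}^{∞}(1-q^i)^3 = Σ_{k∈ℤ} (-1)^k · k · q^{k(k+1)/2}, where the bilateral sum is well-defined since for each fixed power of q only finitely many terms contribute. -/
/-!
Write `(q)_n = ∏_{i=1}^n (1 - q^i)` and `[N, j]` for the Gaussian binomial coefficient. The finite
identity `(q)_m (q)_n = ∑_{k=-n-1}^{m} (-1)^k k q^{k(k+1)/2} [m+n+1, n+k+1]` is proved by
induction on `m` and on `n`. With an arbitrary weight `w(k)` in place of `k`, the two Pascal rules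
for `[N+1, j]` express the sum at `(m+1, n)`, resp. `(m, n+1)`, as the sum at `(m, n)` minus
`q^{m+1}`, resp. `q^{n+1}`, times the sum with the shifted weight `w(k+1)`, resp. `w(k-1)`.
For constant weight every step therefore multiplies the sum by `1 - q^{m+1}`, resp. `1 - q^{n+1}`,
and the sum vanishes at `m = n = 0`, hence everywhere. So shifting the weight `k` by a constant
changes nothing, and the sum with weight `k` also just picks up these factors, starting from `1`.

For `m = n = N`, the factor `(q)_N [2N+1, N+k+1]` is a quotient of products of factors `1 - q^i`
with large `i`, hence `≡ 1` modulo a power of `q` large enough that the coefficient of `q^N` in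
`(q)_N^3` is that of the bilateral sum; and `(q)_M ≡ (q)_N` modulo `q^{N+1}`.
-/

open Finset PowerSeries

def triangular (k : ℤ) : ℕ := (k * (k + 1) / 2).toNat

theorem two_mul_natCast_triangular (k : ℤ) : 2 * (triangular k : ℤ) = k * (k + 1) := by
  have heven : (2 : ℤ) ∣ k * (k + 1) := (Int.even_mul_succ_self k).two_dvd
  have hnonneg : 0 ≤ k * (k + 1) / 2 :=
    Int.ediv_nonneg (by rcases le_or_gt 0 k with hk | hk <;> nlinarith) zero_le_two
  rw [triangular, Int.toNat_of_nonneg hnonneg, Int.mul_ediv_cancel' heven]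

theorem natCast_triangular_sub_one_add (k : ℤ) :
    (triangular (k - 1) : ℤ) + k = triangular k := by
  linarith [two_mul_natCast_triangular k, two_mul_natCast_triangular (k - 1)]

theorem le_natCast_triangular (k : ℤ) : k ≤ triangular k := by
  nlinarith [two_mul_natCast_triangular k]

theorem neg_sub_one_le_natCast_triangular (k : ℤ) : -k - 1 ≤ triangular k := by
  nlinarith [two_mul_natCast_triangular k]

namespace PowerSeries

variable {R : Type*} [CommRing R]

variable (R) in
noncomputable def qPochhammer (n : ℕ) : R⟦X⟧ := ∏ i ∈ range n, (1 - X ^ (i + 1))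

variable (R) in
/-- The lower index is an integer so that sums of Gaussian binomials may run over any interval
containing `[0, n]`. -/
noncomputable def qBinomial : ℕ → ℤ → R⟦X⟧
  | 0, j => if j = 0 then 1 else 0
  | n + 1, j => qBinomial n j + X ^ (n + 1 - j).toNat * qBinomial n (j - 1)

theorem qPochhammer_zero : qPochhammer R 0 = 1 := prod_range_zero _

theorem qPochhammer_succ (n : ℕ) :
    qPochhammer R (n + 1) = qPochhammer R n * (1 - X ^ (n + 1)) :=
  prod_range_succ _ n

theorem isUnit_qPochhammer (n : ℕ) : IsUnit (qPochhammer R n) := by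
  simp [isUnit_iff_constantCoeff, qPochhammer]

theorem qBinomial_succ (n : ℕ) (j : ℤ) :
    qBinomial R (n + 1) j = qBinomial R n j + X ^ (n + 1 - j).toNat * qBinomial R n (j - 1) :=
  rfl

theorem qBinomial_eq_zero {n : ℕ} {j : ℤ} (h : j < 0 ∨ n < j) : qBinomial R n j = 0 := by
  induction n generalizing j with
  | zero => simp [qBinomial]; omega
  | succ n ih => rw [qBinomial_succ, ih (by omega), ih (by omega), mul_zero, add_zero]

@[simp] theorem qBinomial_zero_right (n : ℕ) : qBinomial R n 0 = 1 := by
  induction n with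
  | zero => simp [qBinomial]
  | succ n ih => rw [qBinomial_succ, ih, qBinomial_eq_zero (by omega), mul_zero, add_zero]

@[simp] theorem qBinomial_self (n : ℕ) : qBinomial R n n = 1 := by
  induction n with
  | zero => simp [qBinomial]
  | succ n ih =>
    rw [qBinomial_succ, qBinomial_eq_zero (by omega)]
    simpa using ih

theorem qPochhammer_mul_qPochhammer_mul_qBinomial (a b : ℕ) :
    qPochhammer R a * qPochhammer R b * qBinomial R (a + b) a = qPochhammer R (a + b) := by
  induction a generalizing b with
  | zero => simp [qPochhammer_zero]
  | succ a iha =>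
    induction b with
    | zero => rw [qPochhammer_zero, mul_one, Nat.add_zero, qBinomial_self, mul_one]
    | succ b ihb =>
      have hpascal : qBinomial R (a + 1 + (b + 1)) (a + 1 : ℕ) =
          qBinomial R (a + 1 + b) (a + 1 : ℕ) + X ^ (b + 1) * qBinomial R (a + 1 + b) a := by
        rw [show a + 1 + (b + 1) = a + 1 + b + 1 by omega, qBinomial_succ]
        congr 3
        · omega
        · push_cast; ring
      have iha' := iha (b + 1)
      rw [show a + (b + 1) = a + 1 + b by omega] at iha'
      rw [hpascal, show a + 1 + (b + 1) = a + 1 + b + 1 by omega, qPochhammer_succ (a + 1 + b)]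
      rw [qPochhammer_succ a, qPochhammer_succ b] at *
      linear_combination (1 - X ^ (b + 1)) * ihb + X ^ (b + 1) * (1 - X ^ (a + 1)) * iha'

theorem qBinomial_symm (n : ℕ) (j : ℤ) : qBinomial R n (n - j) = qBinomial R n j := by
  rcases lt_or_ge j 0 with hj | hj
  · rw [qBinomial_eq_zero (by omega), qBinomial_eq_zero (by omega)]
  rcases lt_or_ge (n : ℤ) j with hjn | hjn
  · rw [qBinomial_eq_zero (by omega), qBinomial_eq_zero (by omega)]
  obtain ⟨a, rfl⟩ := Int.eq_ofNat_of_zero_le hj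
  obtain ⟨b, rfl⟩ := Nat.exists_eq_add_of_le (Int.ofNat_le.mp hjn)
  have hab := qPochhammer_mul_qPochhammer_mul_qBinomial (R := R) a b
  have hba := qPochhammer_mul_qPochhammer_mul_qBinomial (R := R) b a
  rw [add_comm b a, mul_comm (qPochhammer R b)] at hba
  rw [show ((a + b : ℕ) : ℤ) - a = b by push_cast; ring]
  exact ((isUnit_qPochhammer a).mul (isUnit_qPochhammer b)).mul_left_cancel (hba.trans hab.symm)

theorem qBinomial_succ' (n : ℕ) (j : ℤ) :
    qBinomial R (n + 1) j = X ^ j.toNat * qBinomial R n j + qBinomial R n (j - 1) := by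
  rw [← qBinomial_symm, qBinomial_succ, ← qBinomial_symm n (j - 1), ← qBinomial_symm n j]
  push_cast
  rw [show (n : ℤ) + 1 - (n + 1 - j) = j by ring, show (n : ℤ) - (j - 1) = n + 1 - j by ring,
    show (n : ℤ) + 1 - j - 1 = n - j by ring, add_comm]

theorem X_pow_dvd_prod_Ico_sub_one {d s : ℕ} (t : ℕ) (h : d ≤ s + 1) :
    (X : R⟦X⟧) ^ d ∣ ∏ i ∈ Ico s t, (1 - X ^ (i + 1)) - 1 := by
  refine prod_induction _ (fun f => (X : R⟦X⟧) ^ d ∣ f - 1) (fun f g hf hg => ?_) (by simp)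
    (fun i hi => ?_)
  · rw [show f * g - 1 = (f - 1) * g + (g - 1) by ring]
    exact dvd_add (dvd_mul_of_dvd_left hf g) hg
  · rw [sub_sub_cancel_left, dvd_neg]
    exact pow_dvd_pow X (by simp at hi; omega)

theorem X_pow_dvd_qPochhammer_sub {m n : ℕ} (h : m ≤ n) :
    (X : R⟦X⟧) ^ (m + 1) ∣ qPochhammer R n - qPochhammer R m := by
  rw [qPochhammer, qPochhammer, ← prod_range_mul_prod_Ico _ h, ← mul_sub_one]
  exact dvd_mul_of_dvd_right (X_pow_dvd_prod_Ico_sub_one n le_rfl) _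

/-- `(q)_c [a+b, a] = ((q)_{a+b} / (q)_b) / ((q)_a / (q)_c)`, and both quotients are products of
factors `1 - X ^ i` with `i > min b c`. -/
theorem X_pow_dvd_qPochhammer_mul_qBinomial_sub_one {a b c d : ℕ} (hca : c ≤ a)
    (hdb : d ≤ b + 1) (hdc : d ≤ c + 1) :
    (X : R⟦X⟧) ^ d ∣ qPochhammer R c * qBinomial R (a + b) a - 1 := by
  set A := ∏ i ∈ Ico c a, (1 - (X : R⟦X⟧) ^ (i + 1))
  set B := ∏ i ∈ Ico b (a + b), (1 - (X : R⟦X⟧) ^ (i + 1))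
  set Z := qPochhammer R c * qBinomial R (a + b) a
  have hA : qPochhammer R a = qPochhammer R c * A := (prod_range_mul_prod_Ico _ hca).symm
  have hB : qPochhammer R (a + b) = qPochhammer R b * B :=
    (prod_range_mul_prod_Ico _ (Nat.le_add_left b a)).symm
  have hAZ : A * Z = B := by
    refine (isUnit_qPochhammer b).mul_left_cancel ?_
    rw [← hB, ← qPochhammer_mul_qPochhammer_mul_qBinomial a b, hA]
    ring
  rw [show Z - 1 = (B - 1) - Z * (A - 1) by rw [← hAZ]; ring]
  exact dvd_sub (X_pow_dvd_prod_Ico_sub_one _ hdb)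
    (dvd_mul_of_dvd_right (X_pow_dvd_prod_Ico_sub_one _ hdc) _)

theorem X_pow_dvd_qPochhammer_mul_qBinomial_two_mul_add_one_sub_one {c d : ℕ} {j : ℤ}
    (h₁ : d ≤ j + 1) (h₂ : d ≤ 2 * c + 2 - j) :
    (X : R⟦X⟧) ^ d ∣ qPochhammer R c * qBinomial R (2 * c + 1) j - 1 := by
  rcases Nat.eq_zero_or_pos d with rfl | hd
  · simp
  wlog hj : c < j generalizing j
  · have hsymm := qBinomial_symm (R := R) (2 * c + 1) j
    push_cast at hsymm
    simpa [hsymm] using this (j := 2 * c + 1 - j) (by omega) (by omega) (by omega)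
  obtain ⟨a, rfl⟩ := Int.eq_ofNat_of_zero_le (show 0 ≤ j by omega)
  have := X_pow_dvd_qPochhammer_mul_qBinomial_sub_one (R := R) (a := a) (b := 2 * c + 1 - a)
    (c := c) (d := d) (by omega) (by omega) (by omega)
  rwa [show a + (2 * c + 1 - a) = 2 * c + 1 by omega] at this

theorem coeff_eq_of_X_pow_dvd_sub {f g : R⟦X⟧} {d n : ℕ} (h : X ^ d ∣ f - g) (hn : n < d) :
    coeff n f = coeff n g :=
  sub_eq_zero.mp (by rw [← map_sub]; exact X_pow_dvd_iff.mp h n hn)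

theorem coeff_mul_eq_of_X_pow_dvd {f g : R⟦X⟧} {a b n : ℕ} (hf : X ^ a ∣ f)
    (hg : X ^ b ∣ g - 1) (hn : n < a + b) : coeff n (f * g) = coeff n f := by
  refine coeff_eq_of_X_pow_dvd_sub ?_ hn
  rw [← mul_sub_one, pow_add]
  exact mul_dvd_mul hf hg

variable (R) in
noncomputable def jacobiTerm (w : ℤ → ℤ) (m n : ℕ) (k : ℤ) : R⟦X⟧ :=
  C ((((-1 : ℤˣ) ^ k : ℤˣ) * w k : ℤ) : R) * X ^ triangular k *
    qBinomial R (m + n + 1) (n + k + 1)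

variable (R) in
noncomputable def jacobiSum (w : ℤ → ℤ) (m n : ℕ) : R⟦X⟧ :=
  ∑ k ∈ Icc (-(n : ℤ) - 1) m, jacobiTerm R w m n k

theorem sum_jacobiTerm_of_subset {w : ℤ → ℤ} {m n : ℕ} {s : Finset ℤ}
    (h : Icc (-(n : ℤ) - 1) m ⊆ s) : ∑ k ∈ s, jacobiTerm R w m n k = jacobiSum R w m n := by
  refine (sum_subset h fun k _ hk => ?_).symm
  rw [jacobiTerm, qBinomial_eq_zero (by simp at hk; push_cast; omega), mul_zero]

theorem jacobiTerm_succ_left (w : ℤ → ℤ) (m n : ℕ) {k : ℤ} (hk : k ≤ m + 1) :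
    jacobiTerm R w (m + 1) n k =
      jacobiTerm R w m n k - X ^ (m + 1) * jacobiTerm R (fun k => w (k + 1)) m n (k - 1) := by
  have hexp : triangular k + (m + 1 - k).toNat = (m + 1) + triangular (k - 1) := by
    have := natCast_triangular_sub_one_add k
    omega
  have hpow : (X : R⟦X⟧) ^ triangular k * X ^ (m + 1 - k).toNat =
      X ^ (m + 1) * X ^ triangular (k - 1) := by
    rw [← pow_add, ← pow_add, hexp]
  have hsign : (((-1 : ℤˣ) ^ k : ℤˣ) : ℤ) = -(((-1 : ℤˣ) ^ (k - 1) : ℤˣ) : ℤ) := by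
    rw [zpow_sub_one]; simp
  rw [jacobiTerm, jacobiTerm, jacobiTerm, show m + 1 + n + 1 = m + n + 1 + 1 by omega,
    qBinomial_succ, sub_add_cancel, show (n : ℤ) + (k - 1) + 1 = n + k by ring,
    show ((m + n + 1 : ℕ) : ℤ) + 1 - (n + k + 1) = m + 1 - k by push_cast; ring,
    add_sub_cancel_right, hsign]
  simp only [Int.cast_mul, Int.cast_neg, map_mul, map_neg]
  linear_combination (-C ((((-1 : ℤˣ) ^ (k - 1) : ℤˣ) : ℤ) : R) * C (w k : R) *
    qBinomial R (m + n + 1) (n + k)) * hpow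

theorem jacobiTerm_succ_right (w : ℤ → ℤ) (m n : ℕ) {k : ℤ} (hk : -(n : ℤ) - 2 ≤ k) :
    jacobiTerm R w m (n + 1) k =
      jacobiTerm R w m n k - X ^ (n + 1) * jacobiTerm R (fun k => w (k - 1)) m n (k + 1) := by
  have hexp : triangular k + (n + (k + 1) + 1).toNat = (n + 1) + triangular (k + 1) := by
    have := natCast_triangular_sub_one_add (k + 1)
    rw [add_sub_cancel_right] at this
    omega
  have hpow : (X : R⟦X⟧) ^ triangular k * X ^ (n + (k + 1) + 1).toNat =
      X ^ (n + 1) * X ^ triangular (k + 1) := by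
    rw [← pow_add, ← pow_add, hexp]
  have hsign : (((-1 : ℤˣ) ^ k : ℤˣ) : ℤ) = -(((-1 : ℤˣ) ^ (k + 1) : ℤˣ) : ℤ) := by
    rw [zpow_add_one]; simp
  have hpascal : qBinomial R (m + (n + 1) + 1) ((n + 1 : ℕ) + k + 1) =
      X ^ (n + (k + 1) + 1).toNat * qBinomial R (m + n + 1) (n + (k + 1) + 1) +
        qBinomial R (m + n + 1) (n + k + 1) := by
    rw [show m + (n + 1) + 1 = m + n + 1 + 1 by omega, qBinomial_succ',
      show ((n + 1 : ℕ) : ℤ) + k + 1 = n + (k + 1) + 1 by push_cast; ring,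
      show (n : ℤ) + (k + 1) + 1 - 1 = n + k + 1 by ring]
  rw [jacobiTerm, jacobiTerm, jacobiTerm, hpascal, hsign, add_sub_cancel_right]
  simp only [Int.cast_mul, Int.cast_neg, map_mul, map_neg]
  linear_combination (-C ((((-1 : ℤˣ) ^ (k + 1) : ℤˣ) : ℤ) : R) * C (w k : R) *
    qBinomial R (m + n + 1) (n + (k + 1) + 1)) * hpow

theorem jacobiSum_succ_left (w : ℤ → ℤ) (m n : ℕ) :
    jacobiSum R w (m + 1) n =
      jacobiSum R w m n - X ^ (m + 1) * jacobiSum R (fun k => w (k + 1)) m n := by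
  have hshift :=
    sum_Ico_add' (jacobiTerm R (fun k => w (k + 1)) m n) (-(n : ℤ) - 1) (m + 2) (-1)
  simp only [← sub_eq_add_neg] at hshift
  rw [← sum_jacobiTerm_of_subset (s := Ico (-(n : ℤ) - 1) (m + 2))
      (fun k hk => by simp at hk ⊢; omega),
    sum_congr rfl fun k hk => jacobiTerm_succ_left w m n (by simp at hk; omega), sum_sub_distrib,
    ← mul_sum, hshift, sum_jacobiTerm_of_subset (fun k hk => by simp at hk ⊢; omega),
    sum_jacobiTerm_of_subset (fun k hk => by simp at hk ⊢; omega)]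

theorem jacobiSum_succ_right (w : ℤ → ℤ) (m n : ℕ) :
    jacobiSum R w m (n + 1) =
      jacobiSum R w m n - X ^ (n + 1) * jacobiSum R (fun k => w (k - 1)) m n := by
  have hshift := sum_Ico_add' (jacobiTerm R (fun k => w (k - 1)) m n) (-(n : ℤ) - 2) (m + 1) 1
  rw [← sum_jacobiTerm_of_subset (s := Ico (-(n : ℤ) - 2) (m + 1))
      (fun k hk => by simp at hk ⊢; omega),
    sum_congr rfl fun k hk => jacobiTerm_succ_right w m n (by simp at hk; omega), sum_sub_distrib,
    ← mul_sum, hshift, sum_jacobiTerm_of_subset (fun k hk => by simp at hk ⊢; omega),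
    sum_jacobiTerm_of_subset (fun k hk => by simp at hk ⊢; omega)]

theorem jacobiSum_zero_zero (w : ℤ → ℤ) : jacobiSum R w 0 0 = C ((w 0 - w (-1) : ℤ) : R) := by
  rw [jacobiSum, show Icc (-((0 : ℕ) : ℤ) - 1) ((0 : ℕ) : ℤ) = {-1, 0} by rfl,
    sum_pair (by norm_num), jacobiTerm, jacobiTerm]
  simp [triangular, show qBinomial R 1 1 = 1 from qBinomial_self 1]
  ring

theorem jacobiSum_one (m n : ℕ) : jacobiSum R (fun _ => 1) m n = 0 := by
  induction m with
  | zero =>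
    induction n with
    | zero => simp [jacobiSum_zero_zero]
    | succ n ih => rw [jacobiSum_succ_right, ih, mul_zero, sub_zero]
  | succ m ih => rw [jacobiSum_succ_left, ih, mul_zero, sub_zero]

theorem jacobiSum_add_const (w : ℤ → ℤ) (c : ℤ) (m n : ℕ) :
    jacobiSum R (fun k => w k + c) m n = jacobiSum R w m n := by
  have h : ∀ k, jacobiTerm R (fun k => w k + c) m n k =
      jacobiTerm R w m n k + C (c : R) * jacobiTerm R (fun _ => 1) m n k := by
    intro k
    simp only [jacobiTerm, mul_add, mul_one, Int.cast_add, Int.cast_mul, map_add, map_mul]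
    ring
  rw [jacobiSum, sum_congr rfl fun k _ => h k, sum_add_distrib, ← mul_sum, ← jacobiSum,
    ← jacobiSum, jacobiSum_one, mul_zero, add_zero]

theorem jacobiSum_id (m n : ℕ) :
    jacobiSum R (fun k => k) m n = qPochhammer R m * qPochhammer R n := by
  induction m with
  | zero =>
    induction n with
    | zero => simp [jacobiSum_zero_zero, qPochhammer_zero]
    | succ n ih =>
      rw [jacobiSum_succ_right, show (fun k : ℤ => k - 1) = fun k => k + -1 by
          simp only [sub_eq_add_neg],
        jacobiSum_add_const, ih, qPochhammer_succ n]
      ring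
  | succ m ih =>
    rw [jacobiSum_succ_left, jacobiSum_add_const, ih, qPochhammer_succ m]
    ring

end PowerSeries

/-- The bilateral form of Jacobi's identity `(q;q)_∞^3 = Σ_{k∈ℤ} (-1)^k k q^{k(k+1)/2}`
in `ℤ[[q]]`, stated coefficientwise: for every `N`, the coefficient of `q^N` in any
sufficiently long truncation `∏_{i=1}^{M}(1-q^i)^3` (any `M ≥ N`) equals the coefficient
of `q^N` in the (finite) sum over all `k ∈ [-N-1, N+1]`, which contains every integer `k`
with `k(k+1)/2 ≤ N`. -/
theorem jacobi_identity_bilateral (N M : ℕ) (h : N ≤ M) :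
    (PowerSeries.coeff (R := ℤ) N) (∏ i ∈ Finset.range M, (1 - (X : PowerSeries ℤ) ^ (i + 1)) ^ 3) =
      (PowerSeries.coeff (R := ℤ) N)
        (∑ k ∈ Finset.Icc (-(N : ℤ) - 1) ((N : ℤ) + 1),
          PowerSeries.C (R := ℤ) ((((-1 : ℤˣ) ^ k : ℤˣ) : ℤ) * k) *
            (X : PowerSeries ℤ) ^ (k * (k + 1) / 2).toNat) := by
  have hcube : qPochhammer ℤ N ^ 3 = ∑ k ∈ Icc (-(N : ℤ) - 1) (N + 1),
      C ((((-1 : ℤˣ) ^ k : ℤˣ) : ℤ) * k) * X ^ triangular k *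
        (qPochhammer ℤ N * qBinomial ℤ (2 * N + 1) (N + k + 1)) := by
    rw [pow_succ', sq, ← jacobiSum_id, ← sum_jacobiTerm_of_subset
      (s := Icc (-(N : ℤ) - 1) (N + 1)) (Icc_subset_Icc le_rfl (by omega)), mul_sum]
    refine sum_congr rfl fun k _ => ?_
    rw [jacobiTerm, show N + N + 1 = 2 * N + 1 by ring, Int.cast_id]
    ring
  rw [prod_pow, ← qPochhammer, coeff_eq_of_X_pow_dvd_sub
    ((X_pow_dvd_qPochhammer_sub h).trans (sub_dvd_pow_sub_pow _ _ 3)) N.lt_succ_self,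
    hcube, map_sum, map_sum]
  refine sum_congr rfl fun k hk => ?_
  have hk₁ := le_natCast_triangular k
  have hk₂ := neg_sub_one_le_natCast_triangular k
  rw [mem_Icc] at hk
  exact coeff_mul_eq_of_X_pow_dvd (dvd_mul_left _ _)
    (X_pow_dvd_qPochhammer_mul_qBinomial_two_mul_add_one_sub_one
      (d := (min (N + k + 2) (N + 1 - k)).toNat) (by omega) (by omega)) (by omega)
end

section
/- As an identity of formal Laurent series (or for complex q with |q| < 1 and z ≠ 0): ∏_{i=0}^{∞}(1 − z q^i) · ∏_{i=1}^{∞}(1 − z^{−1} q^i) · ∏_{i=1}^{∞}(1 − q^i) = Σ_{k=0}^{∞} (−1)^k (1 − z^{2k+1}) z^{−k} q^{k(k+1)/2}. -/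
/-!
Expanding `(a; q)_{2N}` at `a = z q^{-N}` by the finite `q`-binomial theorem, and splitting its
factors into `(z; q)_N` and `(q/z; q)_N`, gives a finite form of the identity in which the pair
of terms `j` carries the Gaussian binomials `[2N, N - j]_q` and `[2N, N + 1 + j]_q`. Since
`[k + m, k]_q = (q; q)_{k+m} / ((q; q)_k (q; q)_m)` and `(q; q)_n` converges to a nonzero limit,
these coefficients, multiplied by `(q; q)_N`, tend to `1` and are bounded uniformly in `N`; the
factor `q^{j(j+1)/2}` then lets Tannery's theorem pass to the limit termwise.
-/

open Finset Filter Topology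

lemma choose_two_succ_s10 (n : ℕ) : (n + 1).choose 2 = n.choose 2 + n := by
  rw [Nat.choose_succ_succ', Nat.choose_one_right, add_comm]

lemma sum_range_two_mul_add_two {M : Type*} [AddCommMonoid M] (f : ℕ → M) (N : ℕ) :
    ∑ k ∈ range (2 * N + 2), f k = ∑ j ∈ range (N + 1), (f (N - j) + f (N + 1 + j)) := by
  rw [sum_add_distrib, show 2 * N + 2 = (N + 1) + (N + 1) by ring, sum_range_add,
    ← sum_range_reflect f (N + 1)]
  simp only [Nat.add_sub_cancel]

lemma summable_pow_choose_two_mul_pow {r : ℝ} (hr0 : 0 ≤ r) (hr : r < 1) (a : ℝ) :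
    Summable fun j : ℕ => r ^ (j + 1).choose 2 * a ^ j := by
  refine summable_of_ratio_norm_eventually_le (r := 1 / 2) (by norm_num) ?_
  have hsmall : Tendsto (fun j : ℕ => r ^ (j + 1) * |a|) atTop (𝓝 0) := by
    simpa using ((tendsto_pow_atTop_nhds_zero_of_lt_one hr0 hr).comp
      (tendsto_add_atTop_nat 1)).mul_const |a|
  filter_upwards [hsmall.eventually_le_const (by norm_num : (0 : ℝ) < 1 / 2)] with j hj
  simp only [Real.norm_eq_abs, abs_mul, abs_pow, abs_of_nonneg hr0]
  calc r ^ (j + 1 + 1).choose 2 * |a| ^ (j + 1)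
      = r ^ (j + 1) * |a| * (r ^ (j + 1).choose 2 * |a| ^ j) := by
        rw [choose_two_succ_s10 (j + 1)]
        ring
    _ ≤ 1 / 2 * (r ^ (j + 1).choose 2 * |a| ^ j) := by gcongr

lemma tendsto_finset_sum_of_dominated_convergence {α β G : Type*} {𝓕 : Filter α}
    [NormedAddCommGroup G] [CompleteSpace G] {s : α → Finset β} {f : α → β → G} {g : β → G}
    {bound : β → ℝ} (hs : Tendsto s 𝓕 atTop) (h_sum : Summable bound)
    (hab : ∀ k, Tendsto (f · k) 𝓕 (𝓝 (g k))) (h_bound : ∀ n k, ‖f n k‖ ≤ bound k) :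
    Tendsto (fun n => ∑ k ∈ s n, f n k) 𝓕 (𝓝 (∑' k, g k)) := by
  classical
  have key := tendsto_tsum_of_dominated_convergence
    (f := fun n k => if k ∈ s n then f n k else 0) h_sum (fun k => (hab k).congr' ?_)
    (Eventually.of_forall fun n k => ?_)
  · refine key.congr fun n => ?_
    rw [tsum_eq_sum (s := s n) fun k hk => if_neg hk]
    exact sum_congr rfl fun k hk => if_pos hk
  · filter_upwards [hs.eventually (eventually_ge_atTop {k})] with n hn
    rw [if_pos (singleton_subset_iff.1 hn)]
  · split_ifs
    · exact h_bound n k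
    · simpa using (norm_nonneg _).trans (h_bound n k)

section Algebra

variable {R : Type*} [CommRing R]

def qPochhammer (a q : R) (n : ℕ) : R := ∏ i ∈ range n, (1 - a * q ^ i)

def qBinomial (q : R) : ℕ → ℕ → R
  | _, 0 => 1
  | 0, _ + 1 => 0
  | n + 1, k + 1 => qBinomial q n k + q ^ (k + 1) * qBinomial q n (k + 1)

variable (a q : R)

@[simp]
lemma qPochhammer_zero : qPochhammer a q 0 = 1 := prod_range_zero _

lemma qPochhammer_succ (n : ℕ) : qPochhammer a q (n + 1) = qPochhammer a q n * (1 - a * q ^ n) :=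
  prod_range_succ _ n

lemma qPochhammer_succ' (n : ℕ) :
    qPochhammer a q (n + 1) = qPochhammer (a * q) q n * (1 - a) := by
  simp only [qPochhammer, prod_range_succ', pow_succ', mul_assoc, pow_zero, mul_one]

@[simp]
lemma qBinomial_zero_right (n : ℕ) : qBinomial q n 0 = 1 := by
  cases n <;> rfl

lemma qBinomial_succ_succ (n k : ℕ) :
    qBinomial q (n + 1) (k + 1) = qBinomial q n k + q ^ (k + 1) * qBinomial q n (k + 1) := rfl

lemma qBinomial_eq_zero_of_lt : ∀ {n k : ℕ}, n < k → qBinomial q n k = 0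
  | 0, _ + 1, _ => rfl
  | n + 1, k + 1, h => by
    rw [qBinomial_succ_succ, qBinomial_eq_zero_of_lt (by omega),
      qBinomial_eq_zero_of_lt (by omega), mul_zero, add_zero]

@[simp]
lemma qBinomial_self (n : ℕ) : qBinomial q n n = 1 := by
  induction n with
  | zero => rfl
  | succ n ih =>
    rw [qBinomial_succ_succ, ih, qBinomial_eq_zero_of_lt q (Nat.lt_succ_self n), mul_zero,
      add_zero]

theorem qBinomial_add_mul_qPochhammer (k m : ℕ) :
    qBinomial q (k + m) k * qPochhammer q q k * qPochhammer q q m = qPochhammer q q (k + m) := by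
  induction k generalizing m with
  | zero => simp
  | succ k ihk =>
    induction m with
    | zero => simp
    | succ m ihm =>
      have hk := ihk (m + 1)
      rw [show k + 1 + (m + 1) = k + m + 1 + 1 by omega, qBinomial_succ_succ,
        qPochhammer_succ _ _ (k + m + 1), qPochhammer_succ _ _ k, qPochhammer_succ _ _ m]
      rw [show k + (m + 1) = k + m + 1 by omega, qPochhammer_succ _ _ m] at hk
      rw [show k + 1 + m = k + m + 1 by omega, qPochhammer_succ _ _ k] at ihm
      linear_combination (1 - q * q ^ k) * hk + q ^ (k + 1) * (1 - q * q ^ m) * ihm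

theorem qPochhammer_eq_sum (n : ℕ) :
    qPochhammer a q n =
      ∑ k ∈ range (n + 1), (-1) ^ k * q ^ k.choose 2 * qBinomial q n k * a ^ k := by
  induction n generalizing a with
  | zero => simp
  | succ n ih =>
    set T : ℕ → R := fun k => (-1) ^ k * q ^ k.choose 2 * qBinomial q n k * (a * q) ^ k
    have hT : ∑ k ∈ range (n + 1), T k = 1 + ∑ k ∈ range (n + 1), T (k + 1) := by
      rw [sum_range_succ', sum_range_succ (fun k => T (k + 1)),
        show T (n + 1) = 0 by simp [T, qBinomial_eq_zero_of_lt q (Nat.lt_succ_self n)]]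
      simp [T, add_comm]
    rw [qPochhammer_succ', ih, sum_range_succ' _ (n + 1)]
    have hU : ∑ k ∈ range (n + 1),
          (-1) ^ (k + 1) * q ^ (k + 1).choose 2 * qBinomial q (n + 1) (k + 1) * a ^ (k + 1) =
        ∑ k ∈ range (n + 1), T (k + 1) - a * ∑ k ∈ range (n + 1), T k := by
      rw [mul_sum, ← sum_sub_distrib]
      refine sum_congr rfl fun k _ => ?_
      simp only [T, qBinomial_succ_succ, choose_two_succ_s10, pow_add, mul_pow]
      ring
    simp only [T] at hT hU
    simp only [Nat.choose_zero_succ, qBinomial_zero_right, pow_zero, mul_one]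
    linear_combination hT - hU

end Algebra

section Field

variable {K : Type*} [Field K] {q : K}

lemma inv_pow_mul_pow_eq (hq : q ≠ 0) {a b c d : ℕ} (h : b + d = a + c) :
    q⁻¹ ^ a * q ^ b = q ^ c * q⁻¹ ^ d := by
  rw [inv_pow, inv_pow, inv_mul_eq_iff_eq_mul₀ (by positivity), ← mul_assoc,
    eq_mul_inv_iff_mul_eq₀ (by positivity), ← pow_add, ← pow_add, h]

lemma qPochhammer_mul_inv_pow (hq : q ≠ 0) {z : K} (hz : z ≠ 0) (N M : ℕ) :
    qPochhammer (z * q⁻¹ ^ N) q (N + M) =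
      (-z) ^ N * q⁻¹ ^ (N + 1).choose 2 * qPochhammer (z⁻¹ * q) q N * qPochhammer z q M := by
  induction N with
  | zero => simp
  | succ N ih =>
    have hfactor : 1 - z * q⁻¹ ^ (N + 1) = -z * q⁻¹ ^ (N + 1) * (1 - z⁻¹ * q * q ^ N) := by
      rw [inv_pow]
      field_simp
      ring
    rw [show N + 1 + M = N + M + 1 by ring, qPochhammer_succ',
      show z * q⁻¹ ^ (N + 1) * q = z * q⁻¹ ^ N by
        rw [pow_succ, mul_assoc, mul_assoc, inv_mul_cancel₀ hq, mul_one],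
      ih, qPochhammer_succ, choose_two_succ_s10 (N + 1), hfactor]
    ring

-- The monomials `(-1) ^ k * q ^ k.choose 2 * a ^ k` of the expansion of `(a; q)_{2N}` at
-- `a = z q⁻¹ ^ N`, for `k = N - j` (with `N = j + M`) and for `k = N + 1 + j`.
lemma monomial_shift_sub (hq : q ≠ 0) {z : K} (hz : z ≠ 0) (j M : ℕ) :
    (-1) ^ M * q ^ M.choose 2 * (z * q⁻¹ ^ (j + M)) ^ M =
      (-z) ^ (j + M) * q⁻¹ ^ (j + M + 1).choose 2 *
        ((-1) ^ j * q ^ (j + 1).choose 2 * z⁻¹ ^ j) := by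
  have hsign : (-1 : K) ^ j * (-1) ^ j = 1 := by rw [← mul_pow]; norm_num
  have hz' : (-z) ^ (j + M) * (-1) ^ j * z⁻¹ ^ j = (-1) ^ M * z ^ M := by
    rw [inv_pow]
    field_simp
    linear_combination z ^ j * z ^ M * (-1) ^ M * hsign
  have hq' : q⁻¹ ^ (j + M + 1).choose 2 * q ^ (j + 1).choose 2 =
      q ^ M.choose 2 * q⁻¹ ^ ((j + M) * M) :=
    inv_pow_mul_pow_eq hq (by qify [Nat.cast_choose_two]; ring)
  rw [mul_pow, ← pow_mul]
  linear_combination -(q⁻¹ ^ (j + M + 1).choose 2 * q ^ (j + 1).choose 2 * hz' +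
    (-1) ^ M * z ^ M * hq')

lemma monomial_shift_add (hq : q ≠ 0) (z : K) (j N : ℕ) :
    (-1) ^ (N + 1 + j) * q ^ (N + 1 + j).choose 2 * (z * q⁻¹ ^ N) ^ (N + 1 + j) =
      -((-z) ^ N * q⁻¹ ^ (N + 1).choose 2 * ((-1) ^ j * q ^ (j + 1).choose 2 * z ^ (j + 1))) := by
  have hq' : q⁻¹ ^ (N + 1).choose 2 * q ^ (j + 1).choose 2 =
      q ^ (N + 1 + j).choose 2 * q⁻¹ ^ (N * (N + 1 + j)) :=
    inv_pow_mul_pow_eq hq (by qify [Nat.cast_choose_two]; ring)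
  rw [mul_pow, ← pow_mul]
  linear_combination (-(-1) ^ (N + 1 + j) * z ^ (N + 1 + j)) * hq'

theorem jacobi_triple_product_finite (hq : q ≠ 0) {z : K} (hz : z ≠ 0) (N : ℕ) :
    qPochhammer z q N * qPochhammer (z⁻¹ * q) q N =
      ∑ j ∈ range (N + 1), (-1) ^ j * q ^ (j + 1).choose 2 *
        (qBinomial q (2 * N) (N - j) * z⁻¹ ^ j -
          qBinomial q (2 * N) (N + 1 + j) * z ^ (j + 1)) := by
  have hc : (-z) ^ N * q⁻¹ ^ (N + 1).choose 2 ≠ 0 := by simp [hz, hq]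
  refine mul_left_cancel₀ hc ?_
  set T : ℕ → K :=
    fun k => (-1) ^ k * q ^ k.choose 2 * qBinomial q (2 * N) k * (z * q⁻¹ ^ N) ^ k
  have hexpand : (-z) ^ N * q⁻¹ ^ (N + 1).choose 2 *
      (qPochhammer z q N * qPochhammer (z⁻¹ * q) q N) = ∑ k ∈ range (2 * N + 2), T k := by
    rw [sum_range_succ, show T (2 * N + 1) = 0 by simp [T, qBinomial_eq_zero_of_lt], add_zero,
      ← qPochhammer_eq_sum, two_mul, qPochhammer_mul_inv_pow hq hz]
    ring
  rw [hexpand, sum_range_two_mul_add_two, mul_sum]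
  refine sum_congr rfl fun j hj => ?_
  obtain ⟨M, rfl⟩ := Nat.exists_eq_add_of_le (Nat.lt_succ_iff.mp (mem_range.mp hj))
  simp only [T, Nat.add_sub_cancel_left]
  rw [mul_right_comm _ (qBinomial q _ M), monomial_shift_sub hq hz,
    mul_right_comm _ (qBinomial q _ (j + M + 1 + j)), monomial_shift_add hq]
  ring

end Field

section Analysis

variable {K : Type*} [NormedField K] {q : K}

lemma summable_norm_mul_pow (a : K) (hq : ‖q‖ < 1) : Summable fun i => ‖a * q ^ i‖ := by
  simpa only [norm_mul, norm_pow] using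
    (summable_geometric_of_lt_one (norm_nonneg q) hq).mul_left ‖a‖

lemma one_sub_mul_pow_ne_zero (hq : ‖q‖ < 1) (i : ℕ) : 1 - q * q ^ i ≠ 0 := by
  rw [← pow_succ', sub_ne_zero]
  intro h
  have := congrArg norm h
  rw [norm_one, norm_pow] at this
  exact (pow_lt_one₀ (norm_nonneg q) hq i.succ_ne_zero).ne' this

lemma qPochhammer_self_ne_zero (hq : ‖q‖ < 1) (n : ℕ) : qPochhammer q q n ≠ 0 :=
  prod_ne_zero_iff.2 fun i _ => one_sub_mul_pow_ne_zero hq i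

lemma qBinomial_add_eq_div (hq : ‖q‖ < 1) (k m : ℕ) :
    qBinomial q (k + m) k =
      qPochhammer q q (k + m) / (qPochhammer q q k * qPochhammer q q m) := by
  rw [← qBinomial_add_mul_qPochhammer, mul_assoc, mul_div_cancel_right₀ _
    (mul_ne_zero (qPochhammer_self_ne_zero hq k) (qPochhammer_self_ne_zero hq m))]

variable [CompleteSpace K]

lemma tendsto_qPochhammer (a : K) (hq : ‖q‖ < 1) :
    Tendsto (qPochhammer a q) atTop (𝓝 (∏' i, (1 - a * q ^ i))) := by
  have hs : Summable fun i => ‖-(a * q ^ i)‖ := by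
    simpa only [norm_neg] using summable_norm_mul_pow a hq
  have h := (multipliable_one_add_of_summable hs).tendsto_prod_tprod_nat
  simp only [← sub_eq_add_neg] at h
  exact h

lemma tprod_one_sub_mul_pow_ne_zero (hq : ‖q‖ < 1) : ∏' i, (1 - q * q ^ i) ≠ 0 := by
  simpa only [sub_eq_add_neg] using
    tprod_one_add_ne_zero_of_summable (f := fun i => -(q * q ^ i))
    (fun i => by simpa only [sub_eq_add_neg] using one_sub_mul_pow_ne_zero hq i)
    (by simpa only [norm_neg] using summable_norm_mul_pow q hq)

lemma tendsto_qBinomial (hq : ‖q‖ < 1) {k m : ℕ → ℕ} (hk : Tendsto k atTop atTop)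
    (hm : Tendsto m atTop atTop) :
    Tendsto (fun n => qBinomial q (k n + m n) (k n)) atTop (𝓝 (∏' i, (1 - q * q ^ i))⁻¹) := by
  have hP := tendsto_qPochhammer q hq
  have h0 := tprod_one_sub_mul_pow_ne_zero hq
  have h := (hP.comp (hk.atTop_add_atTop hm)).div ((hP.comp hk).mul (hP.comp hm))
    (mul_ne_zero h0 h0)
  rw [div_mul_cancel_left₀ h0] at h
  simp only [qBinomial_add_eq_div hq]
  exact h

lemma exists_norm_qPochhammer_le (hq : ‖q‖ < 1) : ∃ C, ∀ n, ‖qPochhammer q q n‖ ≤ C := by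
  obtain ⟨C, hC⟩ := isBounded_iff_forall_norm_le.1
    (Metric.isBounded_range_of_tendsto _ (tendsto_qPochhammer q hq))
  exact ⟨C, fun n => hC _ (Set.mem_range_self n)⟩

lemma exists_norm_qBinomial_le (hq : ‖q‖ < 1) : ∃ C, ∀ n k, ‖qBinomial q n k‖ ≤ C := by
  obtain ⟨A, hA⟩ := exists_norm_qPochhammer_le hq
  obtain ⟨B, hB⟩ := isBounded_iff_forall_norm_le.1 (Metric.isBounded_range_of_tendsto _
    ((tendsto_qPochhammer q hq).inv₀ (tprod_one_sub_mul_pow_ne_zero hq)))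
  have hB' : ∀ n, ‖(qPochhammer q q n)⁻¹‖ ≤ B := fun n => hB _ (Set.mem_range_self n)
  have hA0 : 0 ≤ A := (norm_nonneg _).trans (hA 0)
  have hB0 : 0 ≤ B := (norm_nonneg _).trans (hB' 0)
  refine ⟨A * B * B, fun n k => ?_⟩
  rcases le_or_gt k n with hkn | hnk
  · obtain ⟨m, rfl⟩ := Nat.exists_eq_add_of_le hkn
    rw [qBinomial_add_eq_div hq, div_eq_mul_inv, mul_inv, ← mul_assoc, norm_mul, norm_mul]
    gcongr
    exacts [hA _, hB' _, hB' _]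
  · rw [qBinomial_eq_zero_of_lt _ hnk, norm_zero]
    positivity

lemma tendsto_jacobi_sum (hq : ‖q‖ < 1) (z : K) :
    Tendsto (fun N => ∑ j ∈ range (N + 1), (-1) ^ j * q ^ (j + 1).choose 2 *
        (qPochhammer q q N * qBinomial q (2 * N) (N - j) * z⁻¹ ^ j -
          qPochhammer q q N * qBinomial q (2 * N) (N + 1 + j) * z ^ (j + 1)))
      atTop (𝓝 (∑' j, (-1) ^ j * q ^ (j + 1).choose 2 * (z⁻¹ ^ j - z ^ (j + 1)))) := by
  obtain ⟨A, hA⟩ := exists_norm_qPochhammer_le hq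
  obtain ⟨C, hC⟩ := exists_norm_qBinomial_le hq
  have hA0 : 0 ≤ A := (norm_nonneg _).trans (hA 0)
  have hlim : ∀ {k m : ℕ → ℕ}, Tendsto k atTop atTop → Tendsto m atTop atTop →
      (∀ᶠ N in atTop, k N + m N = 2 * N) →
      Tendsto (fun N => qPochhammer q q N * qBinomial q (2 * N) (k N)) atTop (𝓝 1) := by
    intro k m hk hm hkm
    have h := (tendsto_qPochhammer q hq).mul (tendsto_qBinomial hq hk hm)
    rw [mul_inv_cancel₀ (tprod_one_sub_mul_pow_ne_zero hq)] at h
    refine h.congr' ?_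
    filter_upwards [hkm] with N hN
    rw [hN]
  refine tendsto_finset_sum_of_dominated_convergence
    (tendsto_finset_range.comp (tendsto_add_atTop_nat 1))
    (bound := fun j => A * C *
      (‖q‖ ^ (j + 1).choose 2 * ‖z⁻¹‖ ^ j + ‖z‖ * (‖q‖ ^ (j + 1).choose 2 * ‖z‖ ^ j)))
    ?_ (fun j => ?_) (fun N j => ?_)
  · exact ((summable_pow_choose_two_mul_pow (norm_nonneg q) hq _).add
      ((summable_pow_choose_two_mul_pow (norm_nonneg q) hq _).mul_left _)).mul_left _
  · have h₁ := hlim (k := fun N => N - j) (m := fun N => N + j) (tendsto_sub_atTop_nat j)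
      (tendsto_add_atTop_nat j) (by filter_upwards [eventually_ge_atTop j] with N hN; omega)
    have h₂ := hlim (k := fun N => N + 1 + j) (m := fun N => N - (j + 1))
      (tendsto_add_atTop_nat (1 + j) |>.congr fun N => by ring) (tendsto_sub_atTop_nat (j + 1))
      (by filter_upwards [eventually_ge_atTop (j + 1)] with N hN; omega)
    simpa using
      tendsto_const_nhds.mul ((h₁.mul_const (z⁻¹ ^ j)).sub (h₂.mul_const (z ^ (j + 1))))
  · have hterm : ∀ k (w : K) l,
        ‖qPochhammer q q N * qBinomial q (2 * N) k * w ^ l‖ ≤ A * C * ‖w‖ ^ l := by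
      intro k w l
      rw [norm_mul, norm_mul, norm_pow]
      gcongr
      exacts [hA N, hC _ _]
    calc _ = ‖q‖ ^ (j + 1).choose 2 *
          ‖qPochhammer q q N * qBinomial q (2 * N) (N - j) * z⁻¹ ^ j -
            qPochhammer q q N * qBinomial q (2 * N) (N + 1 + j) * z ^ (j + 1)‖ := by
          simp [norm_mul, norm_pow]
      _ ≤ ‖q‖ ^ (j + 1).choose 2 * (A * C * ‖z⁻¹‖ ^ j + A * C * ‖z‖ ^ (j + 1)) := by
          gcongr
          exact (norm_sub_le _ _).trans (add_le_add (hterm _ _ _) (hterm _ _ _))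
      _ = _ := by ring

end Analysis

/-- Jacobi's triple product identity in the paired form (2.4):
`(z;q)_∞ (q/z;q)_∞ (q;q)_∞ = Σ_{k≥0} (-1)^k (1 - z^{2k+1}) z^{-k} q^{k(k+1)/2}`,
for complex `q` with `|q| < 1` and nonzero complex `z`. -/
theorem jacobi_triple_product_paired (q z : ℂ) (hq : ‖q‖ < 1) (hz : z ≠ 0) :
    (∏' i : ℕ, (1 - z * q ^ i)) * (∏' i : ℕ, (1 - z⁻¹ * q ^ (i + 1))) *
        (∏' i : ℕ, (1 - q ^ (i + 1))) =
      ∑' k : ℕ, (-1 : ℂ) ^ k * (1 - z ^ (2 * k + 1)) * z ^ (-(k : ℤ)) * q ^ (k * (k + 1) / 2) := by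
  rcases eq_or_ne q 0 with rfl | hq0
  · rw [tprod_eq_mulSingle 0 fun i hi => by simp [hi], tsum_eq_single 0 fun k hk => ?_]
    · simp
    · have : k * (k + 1) / 2 ≠ 0 := by
        rw [Nat.div_ne_zero_iff_of_dvd (Nat.even_mul_succ_self k).two_dvd]
        exact ⟨mul_ne_zero hk k.succ_ne_zero, two_ne_zero⟩
      simp [this]
  have hprod := ((tendsto_qPochhammer z hq).mul (tendsto_qPochhammer (z⁻¹ * q) hq)).mul
    (tendsto_qPochhammer q hq)
  have h := tendsto_nhds_unique hprod ((tendsto_jacobi_sum hq z).congr fun N => by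
    rw [jacobi_triple_product_finite hq0 hz, sum_mul]
    exact sum_congr rfl fun j _ => by ring)
  simp only [mul_assoc, ← pow_succ'] at h
  rw [mul_assoc, h]
  refine tsum_congr fun k => ?_
  rw [Nat.choose_two_right, Nat.add_sub_cancel, mul_comm (k + 1) k, zpow_neg, zpow_natCast,
    inv_pow]
  field_simp
  ring
end

section
/- For nonnegative integers m, n, there exists a weight-preserving, sign-reversing involution τ on the set of non-degenerate rooted synchronized partitions in ℛ_{m,n}, where the sign is (−1)^{number of unmarked stars}. -/
open Finset

/-- A rooted synchronized partition in `ℛ_{m,n}` is encoded as `((A, B), j)`: `A` is the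
finset of parts of `α` (strictly decreasing, parts in `[1,m]`), `B` the finset of parts of
`β` (strictly decreasing, parts in `[0,n]`, only the smallest part may be `0`), the
discrepancy `card A - card B` is nonzero, and `j` indexes the distinguished (barred) star
among the `|card A - card B|` stars (`j = 0` being the first star). -/
def IsRootedSync (m n : ℕ) (P : (Finset ℕ × Finset ℕ) × ℕ) : Prop :=
  P.1.1 ⊆ Finset.Icc 1 m ∧ P.1.2 ⊆ Finset.Icc 0 n ∧ P.1.1.card ≠ P.1.2.card ∧
    P.2 < ((P.1.1.card : ℤ) - P.1.2.card).natAbs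

/-- A rooted synchronized partition is degenerate if either (i) it has positive
discrepancy, `β` has no zero part, and the barred star is the first star on the bottom
row, or (ii) it has negative discrepancy, `β` has a zero part, and the barred star is the
last star on the top row. -/
def IsDegenerate (P : (Finset ℕ × Finset ℕ) × ℕ) : Prop :=
  (P.1.2.card < P.1.1.card ∧ 0 ∉ P.1.2 ∧ P.2 = 0) ∨
    (P.1.1.card < P.1.2.card ∧ 0 ∈ P.1.2 ∧ P.2 = P.1.2.card - P.1.1.card - 1)

/-- The weight of a rooted synchronized partition: the sum of all parts. -/
def syncWeight (P : (Finset ℕ × Finset ℕ) × ℕ) : ℕ :=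
  P.1.1.sum id + P.1.2.sum id

/-- The sign `(-1)^{δ(S)}`, where `δ(S)` is the number of stars, a barred star on the top
row not being counted: `(-1)^{r-s}` for positive discrepancy `r-s`, and `(-1)^{s-r-1}` for
negative discrepancy `-(s-r)`. -/
def syncSign (P : (Finset ℕ × Finset ℕ) × ℕ) : ℤ :=
  if P.1.2.card < P.1.1.card then (-1) ^ (P.1.1.card - P.1.2.card)
  else (-1) ^ (P.1.2.card - P.1.1.card - 1)

def tauFn (P : (Finset ℕ × Finset ℕ) × ℕ) : (Finset ℕ × Finset ℕ) × ℕ :=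
  if 0 ∈ P.1.2 then
    ((P.1.1, P.1.2.erase 0), if P.1.2.card < P.1.1.card then P.2 + 1 else P.2)
  else
    ((P.1.1, insert 0 P.1.2), if P.1.2.card < P.1.1.card then P.2 - 1 else P.2)

lemma negpow (a b : ℕ) (h : a = b + 1) : ((-1:ℤ))^a = -(-1)^b := by
  subst h; rw [pow_succ]; ring

lemma negpow' (a b : ℕ) (h : b = a + 1) : ((-1:ℤ))^a = -(-1)^b := by
  subst h; rw [pow_succ]; ring

lemma tau_good (m n : ℕ) (P : (Finset ℕ × Finset ℕ) × ℕ)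
    (h : IsRootedSync m n P) (hd : ¬ IsDegenerate P) :
    (IsRootedSync m n (tauFn P) ∧ ¬ IsDegenerate (tauFn P)) ∧ tauFn (tauFn P) = P ∧
      syncWeight (tauFn P) = syncWeight P ∧ syncSign (tauFn P) = - syncSign P := by
  obtain ⟨⟨A, B⟩, j⟩ := P
  obtain ⟨hA, hB, hne, hj⟩ := h
  simp only [IsDegenerate, not_or, not_and] at hd
  obtain ⟨hd1, hd2⟩ := hd
  simp only at hA hB hne hj hd1 hd2
  by_cases h0 : 0 ∈ B
  · have hcard : (B.erase 0).card = B.card - 1 := Finset.card_erase_of_mem h0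
    have hBpos : 1 ≤ B.card := Finset.card_pos.2 ⟨0, h0⟩
    have h0e : 0 ∉ B.erase 0 := Finset.notMem_erase 0 B
    have hins : insert 0 (B.erase 0) = B := Finset.insert_erase h0
    have hsub : B.erase 0 ⊆ Finset.Icc 0 n := Finset.Subset.trans (Finset.erase_subset 0 B) hB
    have hsum : (B.erase 0).sum id = B.sum id := by
      rw [← hins, Finset.sum_insert h0e]; simp
    by_cases hlt : B.card < A.card
    · have heq : tauFn ((A, B), j) = ((A, B.erase 0), j + 1) := by
        simp [tauFn, h0, hlt]
      have hlt' : (B.erase 0).card < A.card := by omega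
      rw [heq]
      refine ⟨⟨⟨hA, hsub, by simp only; omega, by simp only [hcard]; omega⟩, ?_⟩, ?_, ?_, ?_⟩
      · simp only [IsDegenerate, hcard, h0e]
        push_neg
        refine ⟨?_, ?_⟩ <;> intros <;> first | omega | contradiction
      · simp only [tauFn]
        rw [if_neg h0e, if_pos hlt', hins, Nat.add_sub_cancel]
      · simp only [syncWeight]; rw [hsum]
      · simp only [syncSign, hcard]
        rw [if_pos (show B.card - 1 < A.card by omega), if_pos hlt]
        exact negpow _ _ (by omega)
    · have hlt2 : A.card < B.card := by omega
      have hnd : j < B.card - A.card - 1 := by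
        have := hd2 hlt2 h0
        omega
      have heq : tauFn ((A, B), j) = ((A, B.erase 0), j) := by
        simp [tauFn, h0, hlt]
      have hlt' : ¬ (B.erase 0).card < A.card := by omega
      rw [heq]
      refine ⟨⟨⟨hA, hsub, by simp only [hcard]; omega, by simp only [hcard]; omega⟩, ?_⟩,
        ?_, ?_, ?_⟩
      · simp only [IsDegenerate, hcard, h0e]
        push_neg
        refine ⟨?_, ?_⟩ <;> intros <;> first | omega | contradiction
      · simp only [tauFn]
        rw [if_neg h0e, if_neg hlt', hins]
      · simp only [syncWeight]; rw [hsum]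
      · simp only [syncSign, hcard]
        rw [if_neg (show ¬ B.card - 1 < A.card by omega), if_neg hlt]
        exact negpow' _ _ (by omega)
  · have h0' : (0:ℕ) ∈ insert 0 B := Finset.mem_insert_self 0 B
    have hcard : (insert 0 B).card = B.card + 1 := Finset.card_insert_of_notMem h0
    have hsub : insert 0 B ⊆ Finset.Icc 0 n := by
      intro x hx
      rcases Finset.mem_insert.1 hx with rfl | hx
      · simp
      · exact hB hx
    have hers : (insert 0 B).erase 0 = B := Finset.erase_insert h0
    have hsum : (insert 0 B).sum id = B.sum id := by
      rw [Finset.sum_insert h0]; simp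
    by_cases hlt : B.card < A.card
    · have hjpos : j ≠ 0 := fun hj0 => (hd1 hlt h0) hj0
      have hgap : B.card + 1 < A.card := by omega
      have heq : tauFn ((A, B), j) = ((A, insert 0 B), j - 1) := by
        simp [tauFn, h0, hlt]
      have hlt' : (insert 0 B).card < A.card := by omega
      rw [heq]
      refine ⟨⟨⟨hA, hsub, by simp only [hcard]; omega, by simp only [hcard]; omega⟩, ?_⟩,
        ?_, ?_, ?_⟩
      · simp only [IsDegenerate, hcard, h0']
        push_neg
        refine ⟨?_, ?_⟩ <;> intros <;> first | omega | contradiction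
      · simp only [tauFn]
        rw [if_pos h0', if_pos hlt', hers,
          Nat.sub_add_cancel (Nat.one_le_iff_ne_zero.2 hjpos)]
      · simp only [syncWeight]; rw [hsum]
      · simp only [syncSign, hcard]
        rw [if_pos (show B.card + 1 < A.card by omega), if_pos hlt]
        exact negpow' _ _ (by omega)
    · have hlt2 : A.card < B.card := by omega
      have heq : tauFn ((A, B), j) = ((A, insert 0 B), j) := by
        simp [tauFn, h0, hlt]
      have hlt' : ¬ (insert 0 B).card < A.card := by omega
      rw [heq]
      refine ⟨⟨⟨hA, hsub, by simp only [hcard]; omega, by simp only [hcard]; omega⟩, ?_⟩,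
        ?_, ?_, ?_⟩
      · simp only [IsDegenerate, hcard, h0']
        push_neg
        refine ⟨?_, ?_⟩ <;> intros <;> first | omega | contradiction
      · simp only [tauFn]
        rw [if_pos h0', if_neg hlt', hers]
      · simp only [syncWeight]; rw [hsum]
      · simp only [syncSign, hcard]
        rw [if_neg (show ¬ B.card + 1 < A.card by omega), if_neg hlt]
        exact negpow _ _ (by omega)

/-- Theorem 3.1: there is a weight-preserving, sign-reversing involution `τ` on the set of
non-degenerate rooted synchronized partitions in `ℛ_{m,n}`. -/
theorem exists_sign_reversing_involution (m n : ℕ) :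
    ∃ τ : {P : (Finset ℕ × Finset ℕ) × ℕ // IsRootedSync m n P ∧ ¬ IsDegenerate P} →
          {P : (Finset ℕ × Finset ℕ) × ℕ // IsRootedSync m n P ∧ ¬ IsDegenerate P},
      Function.Involutive τ ∧
        (∀ x, syncWeight (τ x).1 = syncWeight x.1) ∧
        (∀ x, syncSign (τ x).1 = - syncSign x.1) := by
  refine ⟨fun x => ⟨tauFn x.1, (tau_good m n x.1 x.2.1 x.2.2).1⟩, ?_, ?_, ?_⟩
  · intro x
    apply Subtype.ext
    exact (tau_good m n x.1 x.2.1 x.2.2).2.1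
  · intro x; exact (tau_good m n x.1 x.2.1 x.2.2).2.2.1
  · intro x; exact (tau_good m n x.1 x.2.1 x.2.2).2.2.2
end
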